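/- arXiv:1711.09946 — 9 statements merged into one kernel-verified Lean document; each statement's English description precedes it below -/
import Mathlib

section
/- Let A = (Σ, Q, I, F, δ) be a complete nondeterministic Büchi automaton. Then backward direct trace inclusion ⊑^{bw-di} is a preorder on Q and is good for quotienting: L(A/⊑^{bw-di}) = L(A). -/
/-- A nondeterministic automaton (used both as NBA and NFA):
initial states, accepting states, and a transition relation. -/
structure NA (A : Type*) (Q : Type*) where
  ini : Set Q
  acc : Set Q
  trans : Set (Q × A × Q)

namespace NA

variable {A Q Q₁ Q₂ : Type*}

/-- Forward and backward completeness. -/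
def Complete (M : NA A Q) : Prop :=
  ∀ (p : Q) (a : A), (∃ q, (q, a, p) ∈ M.trans) ∧ (∃ q, (p, a, q) ∈ M.trans)

/-- Infinite run on an infinite word. -/
def InfRun (M : NA A Q) (w : ℕ → A) (π : ℕ → Q) : Prop :=
  ∀ i, (π i, w i, π (i + 1)) ∈ M.trans

/-- Fairness: accepting states are visited infinitely often. -/
def Fair (M : NA A Q) (π : ℕ → Q) : Prop :=
  ∀ n, ∃ m, n ≤ m ∧ π m ∈ M.acc

/-- The ω-language of a Büchi automaton. -/
def BuchiLang (M : NA A Q) : Set (ℕ → A) :=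
  {w | ∃ π, π 0 ∈ M.ini ∧ M.InfRun w π ∧ M.Fair π}

/-- Finite run on a finite word (only the first `w.length + 1` values of `π` matter). -/
def FinRun (M : NA A Q) (w : List A) (π : ℕ → Q) : Prop :=
  ∀ (i : ℕ) (h : i < w.length), (π i, w.get ⟨i, h⟩, π (i + 1)) ∈ M.trans

/-- The finite-word language of an NFA. -/
def FinLang (M : NA A Q) : Set (List A) :=
  {w | ∃ π, π 0 ∈ M.ini ∧ M.FinRun w π ∧ π w.length ∈ M.acc}

/-- Direct (forward) trace inclusion. -/
def DiTraceIncl (M : NA A Q₁) (N : NA A Q₂) (p : Q₁) (q : Q₂) : Prop :=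
  ∀ (w : ℕ → A) (π : ℕ → Q₁), π 0 = p → M.InfRun w π →
    ∃ ρ : ℕ → Q₂, ρ 0 = q ∧ N.InfRun w ρ ∧ ∀ i, π i ∈ M.acc → ρ i ∈ N.acc

/-- Fair trace inclusion. -/
def FairTraceIncl (M : NA A Q₁) (N : NA A Q₂) (p : Q₁) (q : Q₂) : Prop :=
  ∀ (w : ℕ → A) (π : ℕ → Q₁), π 0 = p → M.InfRun w π →
    ∃ ρ : ℕ → Q₂, ρ 0 = q ∧ N.InfRun w ρ ∧ (M.Fair π → N.Fair ρ)

/-- Backward direct trace inclusion. -/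
def BwDiTraceIncl (M : NA A Q₁) (N : NA A Q₂) (p : Q₁) (q : Q₂) : Prop :=
  ∀ (w : List A) (π : ℕ → Q₁), π 0 ∈ M.ini → M.FinRun w π → π w.length = p →
    ∃ ρ : ℕ → Q₂, ρ 0 ∈ N.ini ∧ N.FinRun w ρ ∧ ρ w.length = q ∧
      ∀ i, i ≤ w.length → π i ∈ M.acc → ρ i ∈ N.acc

/-- Forward finite trace inclusion. -/
def FwFinTraceIncl (M : NA A Q₁) (N : NA A Q₂) (p : Q₁) (q : Q₂) : Prop :=
  ∀ (w : List A) (π : ℕ → Q₁), π 0 = p → M.FinRun w π → π w.length ∈ M.acc →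
    ∃ ρ : ℕ → Q₂, ρ 0 = q ∧ N.FinRun w ρ ∧ ρ w.length ∈ N.acc

/-- Backward finite trace inclusion. -/
def BwFinTraceIncl (M : NA A Q₁) (N : NA A Q₂) (p : Q₁) (q : Q₂) : Prop :=
  ∀ (w : List A) (π : ℕ → Q₁), π 0 ∈ M.ini → M.FinRun w π → π w.length = p →
    ∃ ρ : ℕ → Q₂, ρ 0 ∈ N.ini ∧ N.FinRun w ρ ∧ ρ w.length = q

/-- Counting backward trace inclusion: the matching initial trace visits
accepting states at least as often. -/
def CountBwTraceIncl (M : NA A Q) (p q : Q) : Prop :=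
  ∀ (w : List A) (π : ℕ → Q), π 0 ∈ M.ini → M.FinRun w π → π w.length = p →
    ∃ ρ : ℕ → Q, ρ 0 ∈ M.ini ∧ M.FinRun w ρ ∧ ρ w.length = q ∧
      {i | i ≤ w.length ∧ π i ∈ M.acc}.ncard ≤ {i | i ≤ w.length ∧ ρ i ∈ M.acc}.ncard

/-- `R` is a direct forward simulation. -/
def IsDiSim (M : NA A Q₁) (N : NA A Q₂) (R : Q₁ → Q₂ → Prop) : Prop :=
  ∀ p q, R p q → (p ∈ M.acc → q ∈ N.acc) ∧
    ∀ a p', (p, a, p') ∈ M.trans → ∃ q', (q, a, q') ∈ N.trans ∧ R p' q'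

/-- Direct forward simulation (the largest direct forward simulation). -/
def DiSim (M : NA A Q₁) (N : NA A Q₂) (p : Q₁) (q : Q₂) : Prop :=
  ∃ R, IsDiSim M N R ∧ R p q

/-- `R` is a backward direct simulation (matching accepting and initial states). -/
def IsBwDiSim (M : NA A Q₁) (N : NA A Q₂) (R : Q₁ → Q₂ → Prop) : Prop :=
  ∀ p q, R p q → (p ∈ M.acc → q ∈ N.acc) ∧ (p ∈ M.ini → q ∈ N.ini) ∧
    ∀ a p', (p', a, p) ∈ M.trans → ∃ q', (q', a, q) ∈ N.trans ∧ R p' q'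

/-- Backward direct simulation (the largest backward direct simulation). -/
def BwDiSim (M : NA A Q₁) (N : NA A Q₂) (p : Q₁) (q : Q₂) : Prop :=
  ∃ R, IsBwDiSim M N R ∧ R p q

/-- `R` is a backward finite-word simulation (matching only initial states). -/
def IsBwSim (M : NA A Q₁) (N : NA A Q₂) (R : Q₁ → Q₂ → Prop) : Prop :=
  ∀ p q, R p q → (p ∈ M.ini → q ∈ N.ini) ∧
    ∀ a p', (p', a, p) ∈ M.trans → ∃ q', (q', a, q) ∈ N.trans ∧ R p' q'

/-- Backward finite-word simulation (the largest backward finite-word simulation). -/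
def BwSim (M : NA A Q₁) (N : NA A Q₂) (p : Q₁) (q : Q₂) : Prop :=
  ∃ R, IsBwSim M N R ∧ R p q

/-- Strict version of a relation: `x ⊏ y` iff `x ⊑ y` and not `y ⊑ x`. -/
def StrictRel (R : Q₁ → Q₁ → Prop) (x y : Q₁) : Prop := R x y ∧ ¬ R y x

/-- Comparing two transitions endpoint-wise; they must carry the same symbol. -/
def PairRel (Rb Rf : Q₁ → Q₂ → Prop) (t : Q₁ × A × Q₁) (t' : Q₂ × A × Q₂) : Prop :=
  t.2.1 = t'.2.1 ∧ Rb t.1 t'.1 ∧ Rf t.2.2 t'.2.2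

/-- Pruned automaton: keep the transitions that are maximal w.r.t. `P`. -/
def prune (M : NA A Q) (P : (Q × A × Q) → (Q × A × Q) → Prop) : NA A Q :=
  ⟨M.ini, M.acc, {t | t ∈ M.trans ∧ ¬ ∃ t' ∈ M.trans, P t t'}⟩

/-- Cross-pruned automaton: remove transitions of `M` subsumed by transitions of `N`. -/
def pruneAB (M : NA A Q₁) (N : NA A Q₂) (P : (Q₁ × A × Q₁) → (Q₂ × A × Q₂) → Prop) :
    NA A Q₁ :=
  ⟨M.ini, M.acc, {t | t ∈ M.trans ∧ ¬ ∃ t' ∈ N.trans, P t t'}⟩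

/-- Saturated automaton: add every transition `S`-below an existing transition. -/
def saturate (M : NA A Q) (S : (Q × A × Q) → (Q × A × Q) → Prop) : NA A Q :=
  ⟨M.ini, M.acc, {t | ∃ t' ∈ M.trans, S t t'}⟩

/-- A transition is transient if it occurs at most once in every trace. -/
def Transient (M : NA A Q) (t : Q × A × Q) : Prop :=
  ∀ (w : ℕ → A) (π : ℕ → Q), M.InfRun w π →
    ∀ i j, (π i, w i, π (i + 1)) = t → (π j, w j, π (j + 1)) = t → i = j

/-- Equivalence class of `q` w.r.t. the equivalence induced by the preorder `R`. -/
def cls (R : Q → Q → Prop) (q : Q) : Set Q := {x | R q x ∧ R x q}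

/-- Quotient automaton by the preorder `R`; equivalence classes are modeled as
the corresponding subsets of `Q`. -/
def quot (M : NA A Q) (R : Q → Q → Prop) : NA A (Set Q) :=
  ⟨{c | ∃ q ∈ M.ini, c = cls R q},
   {c | ∃ q ∈ M.acc, c = cls R q},
   {t | ∃ q₁ q₂, t.1 = cls R q₁ ∧ t.2.2 = cls R q₂ ∧ (q₁, t.2.1, q₂) ∈ M.trans}⟩

/-- `R`-jumping run: before each transition, jump to an `R`-larger state. -/
def JumpRun (M : NA A Q) (R : Q → Q → Prop) (w : ℕ → A) (π π' : ℕ → Q) : Prop :=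
  ∀ i, R (π i) (π' i) ∧ (π' i, w i, π (i + 1)) ∈ M.trans

/-- A jumping run is fair if it is accepting at infinitely many steps. -/
def JumpFair (M : NA A Q) (R : Q → Q → Prop) (π π' : ℕ → Q) : Prop :=
  ∀ n, ∃ m, n ≤ m ∧ ∃ q'' ∈ M.acc, R (π m) q'' ∧ R q'' (π' m)

end NA

section Aux

open NA

variable {A Q : Type*}

private def Wd (w : ℕ → A) (n : ℕ) : List A := List.ofFn (fun i : Fin n => w i)

private lemma Wd_length (w : ℕ → A) (n : ℕ) : (Wd w n).length = n := by
  simp [Wd]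

private lemma finRun_Wd_iff (M : NA A Q) (w : ℕ → A) (n : ℕ) (π : ℕ → Q) :
    M.FinRun (Wd w n) π ↔ ∀ i < n, (π i, w i, π (i+1)) ∈ M.trans := by
  constructor
  · intro h i hi
    have hi' : i < (Wd w n).length := by simpa [Wd_length] using hi
    have h' := h i hi'
    simpa [Wd] using h'
  · intro h i hi
    have hi' : i < n := by simpa [Wd_length] using hi
    have := h i hi'
    simpa [Wd] using this

private lemma bwDiRefl (M : NA A Q) : Reflexive (M.BwDiTraceIncl M) := by
  intro p w π h1 h2 h3
  exact ⟨π, h1, h2, h3, fun i _ h => h⟩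

private lemma bwDiTrans (M : NA A Q) : Transitive (M.BwDiTraceIncl M) := by
  intro p q r hpq hqr w π h0 hrun hend
  obtain ⟨ρ, hρ0, hρrun, hρend, hρacc⟩ := hpq w π h0 hrun hend
  obtain ⟨σ, hσ0, hσrun, hσend, hσacc⟩ := hqr w ρ hρ0 hρrun hρend
  exact ⟨σ, hσ0, hσrun, hσend, fun i hi hacc => hσacc i hi (hρacc i hi hacc)⟩

/-- rematch a finite run ending at `p` to one ending at `q`, preserving
acceptance positions. -/
private lemma rematch (M : NA A Q) {p q : Q} (h : M.BwDiTraceIncl M p q)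
    (w : ℕ → A) (n : ℕ) (π : ℕ → Q) (h0 : π 0 ∈ M.ini)
    (hrun : ∀ i < n, (π i, w i, π (i+1)) ∈ M.trans) (hn : π n = p) :
    ∃ ρ : ℕ → Q, ρ 0 ∈ M.ini ∧ (∀ i < n, (ρ i, w i, ρ (i+1)) ∈ M.trans) ∧
      ρ n = q ∧ ∀ i ≤ n, π i ∈ M.acc → ρ i ∈ M.acc := by
  obtain ⟨ρ, h1, h2, h3, h4⟩ := h (Wd w n) π h0 ((finRun_Wd_iff M w n π).2 hrun)
    (by rwa [Wd_length])
  refine ⟨ρ, h1, (finRun_Wd_iff M w n ρ).1 h2, by rwa [Wd_length] at h3,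
    fun i hi => h4 i (by rwa [Wd_length])⟩

private lemma rel_of_cls_eq {R : Q → Q → Prop} (hrefl : Reflexive R) {p f : Q}
    (h : cls R p = cls R f) : R p f := by
  have hp : p ∈ cls R p := ⟨hrefl p, hrefl p⟩
  rw [h] at hp
  exact hp.2

end Aux

/-- Backward direct trace inclusion is a preorder and is good for
quotienting on complete NBAs. -/
theorem bwDiTraceIncl_preorder_and_gfq
    {A Q : Type*} [Fintype A] [Fintype Q] (M : NA A Q) (hM : M.Complete) :
    Reflexive (M.BwDiTraceIncl M) ∧ Transitive (M.BwDiTraceIncl M) ∧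
      (M.quot (M.BwDiTraceIncl M)).BuchiLang = M.BuchiLang := by
  classical
  set R := M.BwDiTraceIncl M with hR
  have hrefl : Reflexive R := bwDiRefl M
  have htrans : Transitive R := bwDiTrans M
  refine ⟨hrefl, htrans, Set.Subset.antisymm ?_ ?_⟩
  · -- hard direction : L(quot) ⊆ L(M)
    rintro w ⟨C, hC0, hCrun, hCfair⟩
    obtain ⟨q0, hq0i, hq0⟩ : ∃ q ∈ M.ini, C 0 = NA.cls R q := hC0
    -- decompose quotient transitions
    have hstep : ∀ i, ∃ q₁ q₂, C i = NA.cls R q₁ ∧ C (i+1) = NA.cls R q₂ ∧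
        (q₁, w i, q₂) ∈ M.trans := fun i => hCrun i
    choose σ τ hσ hτ htr using hstep
    set Acc : ℕ → Prop := fun i => ∃ f ∈ M.acc, C i = NA.cls R f with hAcc
    -- the key finite claim
    have claim : ∀ n, ∃ π : ℕ → Q, π 0 ∈ M.ini ∧
        (∀ i < n, (π i, w i, π (i+1)) ∈ M.trans) ∧
        NA.cls R (π n) = C n ∧ ∀ i ≤ n, Acc i → π i ∈ M.acc := by
      intro n
      induction n with
      | zero =>
        by_cases h0 : Acc 0
        · obtain ⟨f, hf, hCf⟩ := h0
          have hq0f : R q0 f := rel_of_cls_eq hrefl (by rw [← hq0, ← hCf])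
          obtain ⟨ρ, hρ0, _, hρend, _⟩ :=
            rematch M hq0f w 0 (fun _ => q0) hq0i (by omega) rfl
          refine ⟨fun _ => f, hρend ▸ hρ0, by omega, by rw [← hCf], ?_⟩
          intro i hi _
          exact hf
        · refine ⟨fun _ => q0, hq0i, by omega, hq0.symm, ?_⟩
          intro i hi h
          interval_cases i
          exact absurd h h0
      | succ n ih =>
        obtain ⟨π, hπ0, hπrun, hπcls, hπacc⟩ := ih
        have hrel : R (π n) (σ n) := rel_of_cls_eq hrefl (by rw [hπcls, hσ n])
        obtain ⟨ρ, hρ0, hρrun, hρend, hρacc⟩ := rematch M hrel w n π hπ0 hπrun rfl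
        set ρ' : ℕ → Q := fun i => if i ≤ n then ρ i else τ n with hρ'
        have hρ'run : ∀ i < n + 1, (ρ' i, w i, ρ' (i+1)) ∈ M.trans := by
          intro i hi
          rcases Nat.lt_succ_iff_lt_or_eq.1 hi with hi' | hi'
          · have e1 : ρ' i = ρ i := if_pos (by omega)
            have e2 : ρ' (i+1) = ρ (i+1) := if_pos (by omega)
            rw [e1, e2]; exact hρrun i hi'
          · subst hi'
            have e1 : ρ' i = ρ i := if_pos (by omega)
            have e2 : ρ' (i+1) = τ i := if_neg (by omega)
            rw [e1, e2, hρend]; exact htr i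
        have hρ'end : ρ' (n+1) = τ n := if_neg (by omega)
        have hρ'acc : ∀ i ≤ n, Acc i → ρ' i ∈ M.acc := by
          intro i hi hA
          have e : ρ' i = ρ i := if_pos hi
          rw [e]; exact hρacc i hi (hπacc i hi hA)
        by_cases hAn : Acc (n+1)
        · obtain ⟨f, hf, hCf⟩ := hAn
          have hrel2 : R (τ n) f := rel_of_cls_eq hrefl (by rw [← hτ n, ← hCf])
          have hρ'0 : ρ' 0 ∈ M.ini := by
            have : ρ' 0 = ρ 0 := if_pos (by omega)
            rw [this]; exact hρ0
          obtain ⟨π', hπ'0, hπ'run, hπ'end, hπ'acc⟩ :=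
            rematch M hrel2 w (n+1) ρ' hρ'0 hρ'run hρ'end
          refine ⟨π', hπ'0, hπ'run, by rw [hπ'end, ← hCf], ?_⟩
          intro i hi hA
          rcases Nat.lt_succ_iff_lt_or_eq.1 (Nat.lt_succ_of_le hi) with hi' | hi'
          · exact hπ'acc i hi (hρ'acc i (Nat.lt_succ_iff.1 hi') hA)
          · rw [hi', hπ'end]; exact hf
        · refine ⟨ρ', by have e : ρ' 0 = ρ 0 := if_pos (Nat.zero_le n); rw [e]; exact hρ0, hρ'run,
            by rw [hρ'end, ← hτ n], ?_⟩
          intro i hi hA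
          rcases Nat.lt_succ_iff_lt_or_eq.1 (Nat.lt_succ_of_le hi) with hi' | hi'
          · exact hρ'acc i (Nat.lt_succ_iff.1 hi') hA
          · exact absurd (hi' ▸ hA) hAn
    -- König's lemma style extraction of an infinite run
    set P' : ℕ → (ℕ → Q) → Prop := fun n π => π 0 ∈ M.ini ∧
      (∀ i < n, (π i, w i, π (i+1)) ∈ M.trans) ∧ (∀ i ≤ n, Acc i → π i ∈ M.acc)
      with hP'def
    have hP' : ∀ n, ∃ π, P' n π := by
      intro n; obtain ⟨π, h1, h2, _, h4⟩ := claim n; exact ⟨π, h1, h2, h4⟩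
    have hmono : ∀ {m n : ℕ} {π : ℕ → Q}, m ≤ n → P' n π → P' m π := by
      rintro m n π hmn ⟨h1, h2, h3⟩
      exact ⟨h1, fun i hi => h2 i (by omega), fun i hi => h3 i (by omega)⟩
    have pick : ∀ (n : ℕ) (π : ℕ → Q),
        (∀ m, ∃ ρ, P' m ρ ∧ ∀ i < n, ρ i = π i) →
        ∃ q, ∀ m, ∃ ρ, P' m ρ ∧ (∀ i < n, ρ i = π i) ∧ ρ n = q := by
      intro n π h
      choose ρ hρ hagree using h
      obtain ⟨q, hq⟩ := Finite.exists_infinite_fiber (fun m => ρ m n)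
      have hq' : {m | ρ m n = q}.Infinite := by
        rw [← Set.infinite_coe_iff]
        exact hq
      refine ⟨q, fun m => ?_⟩
      obtain ⟨m', hm'mem, hm'ge⟩ := hq'.exists_gt m
      exact ⟨ρ m', hmono (le_of_lt hm'ge) (hρ m'), hagree m', hm'mem⟩
    set E : ℕ → (ℕ → Q) → Prop := fun n π => ∀ m, ∃ ρ, P' m ρ ∧ ∀ i < n, ρ i = π i
      with hEdef
    have hstep' : ∀ (n : ℕ) (π : ℕ → Q), E n π →
        ∃ π', (∀ i < n, π' i = π i) ∧ E (n+1) π' := by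
      intro n π h
      obtain ⟨q, hq⟩ := pick n π h
      refine ⟨Function.update π n q,
        fun i hi => Function.update_of_ne (by omega) _ _, ?_⟩
      intro m
      obtain ⟨ρ, h1, h2, h3⟩ := hq m
      refine ⟨ρ, h1, fun i hi => ?_⟩
      rcases Nat.lt_succ_iff_lt_or_eq.1 hi with hi' | hi'
      · rw [Function.update_of_ne (by omega), h2 i hi']
      · rw [hi', Function.update_self, h3]
    have hE0 : E 0 (fun _ => q0) := fun m => by
      obtain ⟨π, hπ⟩ := hP' m; exact ⟨π, hπ, by omega⟩
    let g : (n : ℕ) → {f : ℕ → Q // E n f} := fun n =>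
      Nat.rec ⟨fun _ => q0, hE0⟩
        (fun k ih =>
          ⟨(hstep' k ih.1 ih.2).choose, (hstep' k ih.1 ih.2).choose_spec.2⟩) n
    have hgsucc : ∀ k, ∀ i < k, (g (k+1)).1 i = (g k).1 i := fun k =>
      (hstep' k (g k).1 (g k).2).choose_spec.1
    set piInf : ℕ → Q := fun i => (g (i+1)).1 i with hpiInf
    have hagree : ∀ n i, i < n → (g n).1 i = piInf i := by
      intro n
      induction n with
      | zero => omega
      | succ k ih =>
        intro i hi
        rcases Nat.lt_succ_iff_lt_or_eq.1 hi with hi' | hi'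
        · rw [hgsucc k i hi', ih i hi']
        · rw [hi']
    refine ⟨piInf, ?_, ?_, ?_⟩
    · obtain ⟨ρ, h1, h2⟩ := (g 1).2 0
      have e : ρ 0 = piInf 0 := (h2 0 (by omega)).trans (hagree 1 0 (by omega))
      rw [← e]; exact h1.1
    · intro i
      obtain ⟨ρ, h1, h2⟩ := (g (i+2)).2 (i+1)
      have e1 : ρ i = piInf i := (h2 i (by omega)).trans (hagree (i+2) i (by omega))
      have e2 : ρ (i+1) = piInf (i+1) :=
        (h2 (i+1) (by omega)).trans (hagree (i+2) (i+1) (by omega))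
      have := h1.2.1 i (by omega)
      rwa [e1, e2] at this
    · intro n
      obtain ⟨m, hm, hCm⟩ := hCfair n
      have hAm : Acc m := hCm
      obtain ⟨ρ, h1, h2⟩ := (g (m+1)).2 m
      have e : ρ m = piInf m := (h2 m (by omega)).trans (hagree (m+1) m (by omega))
      refine ⟨m, hm, ?_⟩
      rw [← e]
      exact h1.2.2 m le_rfl hAm
  · -- easy direction : L(M) ⊆ L(quot)
    rintro w ⟨π, h0, hrun, hfair⟩
    refine ⟨fun i => NA.cls R (π i), ⟨π 0, h0, rfl⟩,
      fun i => ⟨π i, π (i+1), rfl, rfl, hrun i⟩, fun n => ?_⟩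
    obtain ⟨m, hm, hacc⟩ := hfair n
    exact ⟨m, hm, π m, hacc, rfl⟩
end

section
/- Let A = (Σ, Q_A, I_A, F_A, δ_A) and B = (Σ, Q_B, I_B, F_B, δ_B) be complete NBAs over the same alphabet. (1) If for every accepting state p ∈ F_A there exists an accepting state q ∈ F_B with p ⊑^{bw-di} q (cross backward direct trace inclusion), then L(A) ⊆ L(B). (2) If for every p ∈ F_A there exists q ∈ F_B with p ⊑^{bw-di-sim} q (cross backward direct simulation), then L(A) ⊆ L(B). -/
open Filter in
/-- Ultrafilter limit of a sequence into a finite type. -/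
lemma exists_uf_limit {Q : Type*} [Fintype Q] (U : Ultrafilter ℕ) (f : ℕ → Q) :
    ∃ q : Q, {k | f k = q} ∈ U := by
  obtain ⟨a, -, ha⟩ := Ultrafilter.eq_pure_of_finite_mem (f := U.map f)
    Set.finite_univ Filter.univ_mem
  refine ⟨a, ?_⟩
  have : {a} ∈ (U.map f : Filter Q) := by rw [ha]; exact Filter.mem_pure.mpr rfl
  simpa [Ultrafilter.mem_map, Set.preimage, Set.mem_singleton_iff] using this

/-- Backward direct simulation gives backward matching of finite runs. -/
lemma bwDiSim_finRun {A Q₁ Q₂ : Type*} (M : NA A Q₁) (N : NA A Q₂)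
    (R : Q₁ → Q₂ → Prop) (hR : NA.IsBwDiSim M N R) :
    ∀ (w : List A) (π : ℕ → Q₁), M.FinRun w π → ∀ q, R (π w.length) q →
      ∃ ρ : ℕ → Q₂, N.FinRun w ρ ∧ ρ w.length = q ∧ ∀ i ≤ w.length, R (π i) (ρ i) := by
  intro w
  induction w using List.reverseRecOn with
  | nil =>
    intro π _ q hq
    refine ⟨fun _ => q, fun i hi => absurd hi (Nat.not_lt_zero i), rfl, ?_⟩
    intro i hi
    simp only [List.length_nil, Nat.le_zero] at hi
    subst hi; exact hq
  | append_singleton ws a ih =>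
    intro π hrun q hq
    have hlen : (ws ++ [a]).length = ws.length + 1 := by simp
    rw [hlen] at hq
    have htr : (π ws.length, a, π (ws.length + 1)) ∈ M.trans := by
      have := hrun ws.length (by rw [hlen]; omega)
      simpa using this
    obtain ⟨q', hq', hRq'⟩ := (hR _ _ hq).2.2 a _ htr
    have hrun' : M.FinRun ws π := by
      intro i hi
      have := hrun i (by rw [hlen]; omega)
      simpa [List.getElem_append, hi] using this
    obtain ⟨ρ, hρrun, hρend, hρR⟩ := ih π hrun' q' hRq'
    refine ⟨fun i => if i ≤ ws.length then ρ i else q, ?_, ?_, ?_⟩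
    · intro i hi
      have hi' : i < ws.length + 1 := by rw [← hlen]; exact hi
      show (if i ≤ ws.length then ρ i else q, (ws ++ [a]).get ⟨i, hi⟩,
            if i + 1 ≤ ws.length then ρ (i + 1) else q) ∈ N.trans
      rcases Nat.lt_or_ge i ws.length with h | h
      · rw [if_pos (le_of_lt h), if_pos (by omega : i + 1 ≤ ws.length)]
        have hg : (ws ++ [a]).get ⟨i, hi⟩ = ws.get ⟨i, h⟩ := by
          simp [List.getElem_append, h]
        rw [hg]
        exact hρrun i h
      · obtain rfl : i = ws.length := by omega
        rw [if_pos le_rfl, if_neg (by omega)]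
        have hg : (ws ++ [a]).get ⟨ws.length, hi⟩ = a := by simp
        rw [hg, hρend]
        exact hq'
    · show (if (ws ++ [a]).length ≤ ws.length then ρ ((ws ++ [a]).length) else q) = q
      rw [if_neg (by rw [hlen]; omega)]
    · intro i hi
      rw [hlen] at hi
      show R (π i) (if i ≤ ws.length then ρ i else q)
      rcases le_or_gt i ws.length with h | h
      · rw [if_pos h]; exact hρR i h
      · obtain rfl : i = ws.length + 1 := by omega
        rw [if_neg (by omega)]
        exact hq

/-- Cross backward direct trace inclusion and cross backward direct
simulation are good for inclusion (matching accepting states) on complete NBAs. -/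
theorem bwDi_gfi_nba
    {A Q₁ Q₂ : Type*} [Fintype A] [Fintype Q₁] [Fintype Q₂]
    (M : NA A Q₁) (N : NA A Q₂) (hM : M.Complete) (hN : N.Complete) :
    ((∀ p ∈ M.acc, ∃ q ∈ N.acc, M.BwDiTraceIncl N p q) → M.BuchiLang ⊆ N.BuchiLang) ∧
    ((∀ p ∈ M.acc, ∃ q ∈ N.acc, M.BwDiSim N p q) → M.BuchiLang ⊆ N.BuchiLang) := by
  have key : (∀ p ∈ M.acc, ∃ q ∈ N.acc, M.BwDiTraceIncl N p q) → M.BuchiLang ⊆ N.BuchiLang := by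
    intro h w hw
    obtain ⟨π, hini, hrun, hfair⟩ := hw
    choose n hn hnacc using hfair
    have hfin : ∀ k, ∃ ρ : ℕ → Q₂, ρ 0 ∈ N.ini ∧
        N.FinRun (List.ofFn (fun i : Fin (n k) => w i)) ρ ∧ ρ (n k) ∈ N.acc ∧
        ∀ i ≤ n k, π i ∈ M.acc → ρ i ∈ N.acc := by
      intro k
      obtain ⟨q, hq, hincl⟩ := h (π (n k)) (hnacc k)
      have hlen : (List.ofFn (fun i : Fin (n k) => w i)).length = n k := by simp
      obtain ⟨ρ, h1, h2, h3, h4⟩ := hincl (List.ofFn (fun i : Fin (n k) => w i)) π hini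
        (by intro i hi; have := hrun i; simpa using this) (by rw [hlen])
      rw [hlen] at h3 h4
      exact ⟨ρ, h1, h2, by rw [h3]; exact hq, h4⟩
    choose ρ hρini hρrun hρaccend hρacc using hfin
    set U : Ultrafilter ℕ := Filter.hyperfilter ℕ with hU
    have hgt : ∀ i : ℕ, {k : ℕ | i < k} ∈ U := by
      intro i
      apply Filter.mem_hyperfilter_of_finite_compl
      have hsub : {k : ℕ | i < k}ᶜ ⊆ Set.Iic i := by
        intro x hx
        simp only [Set.mem_compl_iff, Set.mem_setOf_eq, not_lt] at hx
        exact hx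
      exact (Set.finite_Iic i).subset hsub
    choose σ hσ using fun i => exists_uf_limit U (fun k => ρ k i)
    refine ⟨σ, ?_, ?_, ?_⟩
    · obtain ⟨k, hk⟩ := Filter.nonempty_of_mem (hσ 0)
      rw [← hk]; exact hρini k
    · intro i
      have hmem : {k | ρ k i = σ i} ∩ ({k | ρ k (i+1) = σ (i+1)} ∩ {k : ℕ | i < k}) ∈ U :=
        Filter.inter_mem (hσ i) (Filter.inter_mem (hσ (i+1)) (hgt i))
      obtain ⟨k, hk1, hk2, hk3⟩ := Filter.nonempty_of_mem hmem
      have hik : i < n k := lt_of_lt_of_le hk3 (hn k)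
      have := hρrun k i (by simpa using hik)
      rw [hk1, hk2] at this
      simpa using this
    · intro m
      refine ⟨n m, hn m, ?_⟩
      have hmem : {k | ρ k (n m) = σ (n m)} ∩ {k : ℕ | n m < k} ∈ U :=
        Filter.inter_mem (hσ (n m)) (hgt (n m))
      obtain ⟨k, hk1, hk2⟩ := Filter.nonempty_of_mem hmem
      have : ρ k (n m) ∈ N.acc := hρacc k (n m) (le_trans (le_of_lt hk2) (hn k)) (hnacc m)
      rwa [hk1] at this
  refine ⟨key, fun h2 => key ?_⟩
  intro p hp
  obtain ⟨q, hq, R, hR, hRpq⟩ := h2 p hp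
  refine ⟨q, hq, ?_⟩
  intro w π hini hrun hend
  obtain ⟨ρ, hρrun, hρend, hρR⟩ := bwDiSim_finRun M N R hR w π hrun q (by rw [hend]; exact hRpq)
  exact ⟨ρ, (hR _ _ (hρR 0 (Nat.zero_le _))).2.1 hini, hρrun, hρend,
    fun i hi hacc => (hR _ _ (hρR i hi)).1 hacc⟩
end

section
/- Let A = (Σ, Q, I, F, δ) be a complete nondeterministic finite automaton. Then forward finite trace inclusion ⊑^{fw} and backward finite trace inclusion ⊑^{bw} are preorders on Q and each is good for quotienting: L(A/⊑^{fw}) = L(A) and L(A/⊑^{bw}) = L(A). -/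
namespace NA

variable {A Q : Type*}

lemma fwFin_refl (M : NA A Q) : Reflexive (M.FwFinTraceIncl M) :=
  fun _ w π h0 hrun hacc => ⟨π, h0, hrun, hacc⟩

lemma fwFin_trans (M : NA A Q) : Transitive (M.FwFinTraceIncl M) := by
  intro p q r hpq hqr w π h0 hrun hacc
  obtain ⟨ρ, h1, h2, h3⟩ := hpq w π h0 hrun hacc
  exact hqr w ρ h1 h2 h3

lemma bwFin_refl (M : NA A Q) : Reflexive (M.BwFinTraceIncl M) :=
  fun _ w π h0 hrun hend => ⟨π, h0, hrun, hend⟩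

lemma bwFin_trans (M : NA A Q) : Transitive (M.BwFinTraceIncl M) := by
  intro p q r hpq hqr w π h0 hrun hend
  obtain ⟨ρ, h1, h2, h3⟩ := hpq w π h0 hrun hend
  exact hqr w ρ h1 h2 h3

lemma cls_eq_rel {R : Q → Q → Prop} (hR : Reflexive R) {a b : Q}
    (h : cls R a = cls R b) : R a b ∧ R b a := by
  have ha : a ∈ cls R b := h ▸ ⟨hR a, hR a⟩
  exact ⟨ha.2, ha.1⟩

lemma finLang_subset_quot (M : NA A Q) (R : Q → Q → Prop) :
    M.FinLang ⊆ (M.quot R).FinLang := by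
  rintro w ⟨π, h0, hrun, hacc⟩
  refine ⟨fun i => cls R (π i), ⟨π 0, h0, rfl⟩, ?_, ⟨π w.length, hacc, rfl⟩⟩
  intro i h
  exact ⟨π i, π (i + 1), rfl, rfl, hrun i h⟩

lemma quot_bw_subset (M : NA A Q) :
    (M.quot (M.BwFinTraceIncl M)).FinLang ⊆ M.FinLang := by
  set R := M.BwFinTraceIncl M with hRdef
  rintro w ⟨ρ, ⟨qI, hqI, h0⟩, hrun, f, hf, hn⟩
  have key : ∀ k, k ≤ w.length → ∀ q, ρ k = cls R q →
      ∃ π : ℕ → Q, π 0 ∈ M.ini ∧ M.FinRun (w.take k) π ∧ π k = q := by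
    intro k
    induction k with
    | zero =>
      intro _ q hq
      have hR : R qI q := (cls_eq_rel (bwFin_refl M) (h0.symm.trans hq)).1
      obtain ⟨σ, hσi, _, hσe⟩ :=
        hR [] (fun _ => qI) hqI (by intro i h; simp at h) rfl
      exact ⟨σ, hσi, by intro i h; simp at h, hσe⟩
    | succ k ih =>
      intro hk q hq
      obtain ⟨q₁, q₂, hc1, hc2, htr⟩ := hrun k (by omega)
      obtain ⟨π, hπi, hπr, hπk⟩ := ih (by omega) q₁ hc1
      set π' : ℕ → Q := fun i => if i ≤ k then π i else q₂ with hπ'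
      have hlen : (w.take (k + 1)).length = k + 1 := by
        simp [List.length_take]; omega
      have hrun' : M.FinRun (w.take (k + 1)) π' := by
        intro i hi
        rw [hlen] at hi
        have hget : (w.take (k + 1)).get ⟨i, by omega⟩ = w.get ⟨i, by omega⟩ := by
          simp [List.get_eq_getElem, List.getElem_take]
        rcases Nat.lt_or_ge i k with hik | hik
        · have h1 : π' i = π i := by simp [hπ', Nat.le_of_lt hik]
          have h2 : π' (i + 1) = π (i + 1) := by
            simp only [hπ', if_pos (Nat.succ_le_of_lt hik)]
          rw [hget, h1, h2]
          have := hπr i (by simp [List.length_take]; omega)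
          simpa [List.get_eq_getElem, List.getElem_take] using this
        · have hik' : i = k := by omega
          subst hik'
          have h1 : π' i = q₁ := by simp [hπ', hπk]
          have h2 : π' (i + 1) = q₂ := by simp [hπ']
          rw [hget, h1, h2]
          exact htr
      have hR : R q₂ q := (cls_eq_rel (bwFin_refl M) (hc2.symm.trans hq)).1
      obtain ⟨σ, hσi, hσr, hσe⟩ := hR (w.take (k + 1)) π' (by simpa [hπ'] using hπi) hrun'
        (by rw [hlen]; simp [hπ'])
      exact ⟨σ, hσi, hσr, by rwa [hlen] at hσe⟩
  obtain ⟨π, hπi, hπr, hπe⟩ := key w.length le_rfl f hn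
  exact ⟨π, hπi, by simpa using hπr, hπe ▸ hf⟩

lemma quot_fw_subset (M : NA A Q) :
    (M.quot (M.FwFinTraceIncl M)).FinLang ⊆ M.FinLang := by
  set R := M.FwFinTraceIncl M with hRdef
  rintro w ⟨ρ, ⟨qI, hqI, h0⟩, hrun, f, hf, hn⟩
  have key : ∀ m k, k + m = w.length → ∀ q, ρ k = cls R q →
      ∃ π : ℕ → Q, π 0 = q ∧ M.FinRun (w.drop k) π ∧ π m ∈ M.acc := by
    intro m
    induction m with
    | zero =>
      intro k hk q hq
      have hkn : k = w.length := by omega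
      subst hkn
      have hR : R f q := (cls_eq_rel (fwFin_refl M) (hn.symm.trans hq)).1
      obtain ⟨σ, hσ0, _, hσa⟩ :=
        hR [] (fun _ => f) rfl (by intro i h; simp at h) hf
      exact ⟨σ, hσ0, by intro i h; simp at h, hσa⟩
    | succ m ih =>
      intro k hk q hq
      obtain ⟨q₁, q₂, hc1, hc2, htr⟩ := hrun k (by omega)
      obtain ⟨π, hπ0, hπr, hπa⟩ := ih (k + 1) (by omega) q₂ hc2
      set π' : ℕ → Q := fun i => if i = 0 then q₁ else π (i - 1) with hπ'
      have hlen : (w.drop k).length = m + 1 := by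
        simp [List.length_drop]; omega
      have hrun' : M.FinRun (w.drop k) π' := by
        intro i hi
        rw [hlen] at hi
        have hget : (w.drop k).get ⟨i, by omega⟩ = w.get ⟨k + i, by omega⟩ := by
          simp [List.get_eq_getElem, List.getElem_drop]
        rcases Nat.eq_zero_or_pos i with hi0 | hi0
        · subst hi0
          have h1 : π' 0 = q₁ := by simp [hπ']
          have h2 : π' 1 = π 0 := by simp [hπ']
          rw [hget, h1, h2, hπ0]
          simpa using htr
        · obtain ⟨j, rfl⟩ := Nat.exists_eq_succ_of_ne_zero (Nat.pos_iff_ne_zero.mp hi0)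
          have h1 : π' (j + 1) = π j := by simp [hπ']
          have h2 : π' (j + 1 + 1) = π (j + 1) := by simp [hπ']
          rw [hget, h1, h2]
          have := hπr j (by simp [List.length_drop]; omega)
          have hg2 : (w.drop (k + 1)).get ⟨j, by simp [List.length_drop]; omega⟩
              = w.get ⟨k + (j + 1), by omega⟩ := by
            simp [List.get_eq_getElem, List.getElem_drop]; ring_nf
          rwa [hg2] at this
      have hacc' : π' ((w.drop k).length) ∈ M.acc := by
        rw [hlen]; simpa [hπ'] using hπa
      have hR : R q₁ q := (cls_eq_rel (fwFin_refl M) (hc1.symm.trans hq)).1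
      obtain ⟨σ, hσ0, hσr, hσa⟩ := hR (w.drop k) π' (by simp [hπ']) hrun' hacc'
      exact ⟨σ, hσ0, hσr, by rwa [hlen] at hσa⟩
  obtain ⟨π, hπ0, hπr, hπa⟩ := key w.length 0 (by omega) qI h0
  exact ⟨π, hπ0 ▸ hqI, by simpa using hπr, hπa⟩

end NA

/-- Forward and backward finite trace inclusions are preorders and
are good for quotienting on complete NFAs. -/
theorem fw_bw_finTraceIncl_preorder_and_gfq
    {A Q : Type*} [Fintype A] [Fintype Q] (M : NA A Q) (hM : M.Complete) :
    (Reflexive (M.FwFinTraceIncl M) ∧ Transitive (M.FwFinTraceIncl M) ∧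
      (M.quot (M.FwFinTraceIncl M)).FinLang = M.FinLang) ∧
    (Reflexive (M.BwFinTraceIncl M) ∧ Transitive (M.BwFinTraceIncl M) ∧
      (M.quot (M.BwFinTraceIncl M)).FinLang = M.FinLang) := by
  refine ⟨⟨M.fwFin_refl, M.fwFin_trans, ?_⟩, M.bwFin_refl, M.bwFin_trans, ?_⟩
  · exact le_antisymm (M.quot_fw_subset) (M.finLang_subset_quot _)
  · exact le_antisymm (M.quot_bw_subset) (M.finLang_subset_quot _)
end

section
/- Let A = (Σ, Q, I, F, δ) be a complete NBA and let R ⊆ Q × Q be a strict partial order (an irreflexive and transitive relation) contained in direct trace inclusion ⊑^{di}. Then P(id, R) is good for pruning: L(Prune(A, P(id, R))) = L(A). In particular, P(id, ⊏^{di}) is good for pruning, where ⊏^{di} is the strict version of ⊑^{di}. -/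
section Aux

variable {A Q : Type*}

private lemma exists_maximal_above [Fintype Q] (R : Q → Q → Prop)
    (hirr : ∀ x, ¬ R x x) (htrans : Transitive R) (S : Set Q) :
    ∀ x ∈ S, ∃ y ∈ S, (x = y ∨ R x y) ∧ ∀ z ∈ S, ¬ R y z := by
  classical
  have H : ∀ n : ℕ, ∀ x ∈ S, (Set.toFinset {u | R x u}).card ≤ n →
      ∃ y ∈ S, (x = y ∨ R x y) ∧ ∀ z ∈ S, ¬ R y z := by
    intro n
    induction n with
    | zero =>
      intro x hx hcard
      refine ⟨x, hx, Or.inl rfl, fun z _ hRz => ?_⟩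
      have hz : z ∈ Set.toFinset {u | R x u} := by simpa using hRz
      have := Finset.card_eq_zero.mp (Nat.le_zero.mp hcard)
      simp [this] at hz
    | succ n ih =>
      intro x hx hcard
      by_cases h : ∃ z ∈ S, R x z
      · obtain ⟨z, hz, hRz⟩ := h
        have hss : Set.toFinset {u | R z u} ⊂ Set.toFinset {u | R x u} := by
          constructor
          · intro u hu
            simp only [Set.mem_toFinset, Set.mem_setOf_eq] at hu ⊢
            exact htrans hRz hu
          · intro hsub
            have : z ∈ Set.toFinset {u | R z u} := hsub (by simpa using hRz)
            simp only [Set.mem_toFinset, Set.mem_setOf_eq] at this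
            exact hirr z this
        have hlt := Finset.card_lt_card hss
        obtain ⟨y, hy, hor, hmax⟩ := ih z hz (by omega)
        exact ⟨y, hy, Or.inr (hor.elim (fun e => e ▸ hRz) (htrans hRz)), hmax⟩
      · exact ⟨x, hx, Or.inl rfl, fun z hz hRz => h ⟨z, hz, hRz⟩⟩
  intro x hx
  exact H _ x hx le_rfl

private lemma prune_buchi_subset (M : NA A Q)
    (P : (Q × A × Q) → (Q × A × Q) → Prop) :
    (M.prune P).BuchiLang ⊆ M.BuchiLang := by
  rintro w ⟨π, h0, hrun, hfair⟩
  exact ⟨π, h0, fun i => (hrun i).1, hfair⟩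

private lemma key_gfp [Fintype Q] (M : NA A Q)
    (R : Q → Q → Prop) (hirr : ∀ x, ¬ R x x) (htrans : Transitive R)
    (hsub : ∀ x y, R x y → M.DiTraceIncl M x y) :
    (M.prune (NA.PairRel Eq R)).BuchiLang = M.BuchiLang := by
  classical
  refine Set.Subset.antisymm (prune_buchi_subset M _) ?_
  rintro w ⟨π, h0, hrun, hfair⟩
  -- "Good i (q, σ)": σ is a run from q on the word shifted by i,
  -- accepting whenever π (i+j) is accepting.
  set Good : ℕ → Q × (ℕ → Q) → Prop := fun i qσ =>
    qσ.2 0 = qσ.1 ∧ (∀ j, (qσ.2 j, w (i + j), qσ.2 (j + 1)) ∈ M.trans) ∧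
      (∀ j, π (i + j) ∈ M.acc → qσ.2 j ∈ M.acc) with hGoodDef
  have base : Good 0 (π 0, π) := by
    refine ⟨rfl, fun j => ?_, fun j hj => ?_⟩
    · simpa using hrun j
    · simpa using hj
  have step : ∀ i (qσ : Q × (ℕ → Q)), Good i qσ →
      ∃ qσ' : Q × (ℕ → Q), Good (i + 1) qσ' ∧
        (qσ.1, w i, qσ'.1) ∈ (M.prune (NA.PairRel Eq R)).trans := by
    rintro i ⟨q, σ⟩ ⟨he, htr, hacc⟩
    simp only at he htr hacc
    have hσ1 : σ 1 ∈ {r | (q, w i, r) ∈ M.trans} := by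
      have := htr 0
      simpa [he] using this
    obtain ⟨y, hy, hor, hmax⟩ :=
      exists_maximal_above R hirr htrans {r | (q, w i, r) ∈ M.trans} (σ 1) hσ1
    have hprtrans : (q, w i, y) ∈ (M.prune (NA.PairRel Eq R)).trans := by
      refine ⟨hy, ?_⟩
      rintro ⟨⟨p', a', r'⟩, ht', hsym, heq, hR⟩
      simp only at hsym heq hR
      subst hsym heq
      exact hmax r' ht' hR
    rcases hor with heq1 | hR1
    · -- y = σ 1 : just shift σ
      refine ⟨(y, fun j => σ (j + 1)), ⟨?_, fun j => ?_, fun j hj => ?_⟩, hprtrans⟩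
      · simpa using heq1
      · have := htr (j + 1)
        have harith : i + (j + 1) = i + 1 + j := by omega
        simpa [harith] using this
      · have harith : i + 1 + j = i + (j + 1) := by omega
        exact hacc (j + 1) (by rwa [← harith])
    · -- R (σ 1) y : use trace inclusion from σ 1 to y
      have hrun' : M.InfRun (fun j => w (i + 1 + j)) (fun j => σ (j + 1)) := by
        intro j
        have := htr (j + 1)
        have harith : i + (j + 1) = i + 1 + j := by omega
        simpa [harith] using this
      obtain ⟨ρ, hρ0, hρrun, hρacc⟩ := hsub _ _ hR1 _ _ rfl hrun'
      refine ⟨(y, ρ), ⟨hρ0, fun j => hρrun j, fun j hj => ?_⟩, hprtrans⟩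
      have harith : i + 1 + j = i + (j + 1) := by omega
      exact hρacc j (hacc (j + 1) (by rwa [← harith]))
  -- build the run by dependent recursion
  let F : ∀ n : ℕ, {x : Q × (ℕ → Q) // Good n x} :=
    fun n => Nat.rec ⟨(π 0, π), base⟩
      (fun k ih => ⟨(step k ih.1 ih.2).choose, (step k ih.1 ih.2).choose_spec.1⟩) n
  have hFstep : ∀ n, ((F n).1.1, w n, (F (n + 1)).1.1) ∈ (M.prune (NA.PairRel Eq R)).trans :=
    fun n => (step n (F n).1 (F n).2).choose_spec.2
  refine ⟨fun n => (F n).1.1, h0, hFstep, fun n => ?_⟩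
  obtain ⟨m, hm, hmacc⟩ := hfair n
  obtain ⟨he, -, hacc⟩ := (F m).2
  refine ⟨m, hm, ?_⟩
  have : (F m).1.2 0 ∈ M.acc := hacc 0 (by simpa using hmacc)
  rwa [he] at this

private lemma diTraceIncl_trans (M : NA A Q) :
    Transitive (M.DiTraceIncl M) := by
  intro x y z hxy hyz w π hπ0 hπrun
  obtain ⟨ρ, hρ0, hρrun, hρacc⟩ := hxy w π hπ0 hπrun
  obtain ⟨τ, hτ0, hτrun, hτacc⟩ := hyz w ρ hρ0 hρrun
  exact ⟨τ, hτ0, hτrun, fun i hi => hτacc i (hρacc i hi)⟩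

end Aux

/-- For every strict partial order `R` contained in direct trace
inclusion, `P(id, R)` is good for pruning on complete NBAs; in particular
`P(id, ⊏ᵈⁱ)` is good for pruning. -/
theorem prune_id_diTraceIncl_gfp
    {A Q : Type*} [Fintype A] [Fintype Q] (M : NA A Q) (hM : M.Complete)
    (R : Q → Q → Prop) (hirr : ∀ x, ¬ R x x) (htrans : Transitive R)
    (hsub : ∀ x y, R x y → M.DiTraceIncl M x y) :
    (M.prune (NA.PairRel Eq R)).BuchiLang = M.BuchiLang ∧
    (M.prune (NA.PairRel Eq (NA.StrictRel (M.DiTraceIncl M)))).BuchiLang = M.BuchiLang := by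
  constructor
  · exact key_gfp M R hirr htrans hsub
  · refine key_gfp M _ (fun x h => h.2 h.1) ?_ (fun x y h => h.1)
    intro x y z hxy hyz
    exact ⟨diTraceIncl_trans M hxy.1 hyz.1,
      fun hzx => hyz.2 (diTraceIncl_trans M hzx hxy.1)⟩
end

section
/- Let A = (Σ, Q, I, F, δ) be a complete NBA and let R ⊆ Q × Q be a strict partial order (an irreflexive and transitive relation) contained in backward direct trace inclusion ⊑^{bw-di}. Then P(R, id) is good for pruning: L(Prune(A, P(R, id))) = L(A). In particular, P(⊏^{bw-di}, id) is good for pruning, where ⊏^{bw-di} is the strict version of ⊑^{bw-di}. -/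
section GFPAux

variable {A Q : Type*}

private lemma gfp_exists_maximal_aux [Fintype Q] (R : Q → Q → Prop)
    (hirr : ∀ x, ¬ R x x) (htrans : Transitive R) :
    ∀ (n : ℕ) (T : Set Q) (x : Q), x ∈ T → ({z | R x z}).ncard ≤ n →
      ∃ s ∈ T, (x = s ∨ R x s) ∧ ∀ s' ∈ T, ¬ R s s' := by
  intro n
  induction n with
  | zero =>
    intro T x hx hcard
    refine ⟨x, hx, Or.inl rfl, fun s' hs' hR => ?_⟩
    have hpos : 0 < ({z | R x z}).ncard :=
      (Set.ncard_pos (Set.toFinite _)).mpr ⟨s', hR⟩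
    omega
  | succ n ih =>
    intro T x hx hcard
    by_cases h : ∃ y ∈ T, R x y
    · obtain ⟨y, hy, hxy⟩ := h
      have h1 : {z | R y z} ⊆ {z | R x z} := fun z hz => htrans hxy hz
      have hss : {z | R y z} ⊂ {z | R x z} :=
        (Set.ssubset_iff_of_subset h1).mpr ⟨y, hxy, hirr y⟩
      have hlt : ({z | R y z}).ncard < ({z | R x z}).ncard :=
        Set.ncard_lt_ncard hss (Set.toFinite _)
      obtain ⟨s, hs, hys, hmax⟩ := ih T y hy (by omega)
      refine ⟨s, hs, Or.inr ?_, hmax⟩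
      rcases hys with rfl | h'
      · exact hxy
      · exact htrans hxy h'
    · push_neg at h
      exact ⟨x, hx, Or.inl rfl, h⟩

private lemma gfp_exists_maximal [Fintype Q] (R : Q → Q → Prop)
    (hirr : ∀ x, ¬ R x x) (htrans : Transitive R) (T : Set Q) (x : Q) (hx : x ∈ T) :
    ∃ s ∈ T, (x = s ∨ R x s) ∧ ∀ s' ∈ T, ¬ R s s' :=
  gfp_exists_maximal_aux R hirr htrans _ T x hx le_rfl

private lemma gfp_ultra_limit {α : Type*} [Finite α] (U : Ultrafilter ℕ) (g : ℕ → α) :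
    ∃ q, {n | g n = q} ∈ U := by
  by_contra h
  push_neg at h
  have h' : ∀ q : α, {n | g n = q}ᶜ ∈ U := fun q =>
    Ultrafilter.compl_mem_iff_notMem.mpr (h q)
  have hmem : (⋂ q : α, {n | g n = q}ᶜ) ∈ U := Filter.iInter_mem.mpr h'
  obtain ⟨n, hn⟩ := Filter.nonempty_of_mem hmem
  simp only [Set.mem_iInter, Set.mem_compl_iff, Set.mem_setOf_eq] at hn
  exact hn (g n) rfl

private lemma gfp_finRun_concat (M : NA A Q) (ws : List A) (a : A) (σ : ℕ → Q)
    (h : M.FinRun (ws ++ [a]) σ) :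
    M.FinRun ws σ ∧ (σ ws.length, a, σ (ws.length + 1)) ∈ M.trans := by
  constructor
  · intro i hi
    have hi' : i < (ws ++ [a]).length := by simp; omega
    have ht := h i hi'
    have hg : (ws ++ [a]).get ⟨i, hi'⟩ = ws.get ⟨i, hi⟩ := by
      simp only [List.get_eq_getElem]
      exact List.getElem_append_left hi
    rwa [hg] at ht
  · have hi' : ws.length < (ws ++ [a]).length := by simp
    have ht := h ws.length hi'
    have hg : (ws ++ [a]).get ⟨ws.length, hi'⟩ = a := by
      simp [List.get_eq_getElem]
    rwa [hg] at ht

private lemma gfp_finRun_concat' (M : NA A Q) (ws : List A) (a : A) (σ : ℕ → Q)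
    (h1 : M.FinRun ws σ) (h2 : (σ ws.length, a, σ (ws.length + 1)) ∈ M.trans) :
    M.FinRun (ws ++ [a]) σ := by
  intro i hi
  have hi2 : i < ws.length + 1 := by simpa using hi
  rcases Nat.lt_or_ge i ws.length with hlt | hge
  · have hg : (ws ++ [a]).get ⟨i, hi⟩ = ws.get ⟨i, hlt⟩ := by
      simp only [List.get_eq_getElem]
      exact List.getElem_append_left hlt
    rw [hg]
    exact h1 i hlt
  · have heq : i = ws.length := by omega
    subst heq
    have hg : (ws ++ [a]).get ⟨ws.length, hi⟩ = a := by
      simp [List.get_eq_getElem]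
    rw [hg]
    exact h2

private lemma gfp_key [Fintype Q] (M : NA A Q) (R : Q → Q → Prop)
    (hirr : ∀ x, ¬ R x x) (htrans : Transitive R)
    (hsub : ∀ x y, R x y → M.BwDiTraceIncl M x y) (ws : List A) :
    ∀ σ : ℕ → Q, σ 0 ∈ M.ini → M.FinRun ws σ →
      ∃ ρ : ℕ → Q, ρ 0 ∈ M.ini ∧ (M.prune (NA.PairRel R Eq)).FinRun ws ρ ∧
        ρ ws.length = σ ws.length ∧ ∀ i ≤ ws.length, σ i ∈ M.acc → ρ i ∈ M.acc := by
  induction ws using List.reverseRecOn with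
  | nil =>
    intro σ h0 _
    exact ⟨σ, h0, fun i hi => absurd hi (Nat.not_lt_zero i), rfl, fun i _ ha => ha⟩
  | append_singleton ws a ih =>
    intro σ h0 hrun
    obtain ⟨hrunw, htr⟩ := gfp_finRun_concat M ws a σ hrun
    obtain ⟨s, hsT, hRs, hmax⟩ := gfp_exists_maximal R hirr htrans
      {z | (z, a, σ (ws.length + 1)) ∈ M.trans} (σ ws.length) htr
    have hσ' : ∃ σ' : ℕ → Q, σ' 0 ∈ M.ini ∧ M.FinRun ws σ' ∧ σ' ws.length = s ∧
        ∀ i ≤ ws.length, σ i ∈ M.acc → σ' i ∈ M.acc := by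
      rcases hRs with heq | hR
      · exact ⟨σ, h0, hrunw, heq, fun i _ ha => ha⟩
      · exact hsub _ _ hR ws σ h0 hrunw rfl
    obtain ⟨σ', h0', hrun', hend', hdom'⟩ := hσ'
    obtain ⟨ρ₀, hρ0, hρrun, hρend, hρdom⟩ := ih σ' h0' hrun'
    set l := ws.length with hl
    refine ⟨fun i => if i ≤ l then ρ₀ i else σ (l + 1), ?_, ?_, ?_, ?_⟩
    · simpa using hρ0
    · apply gfp_finRun_concat'
      · intro i hi
        have h1 : i ≤ l := le_of_lt hi
        have h2 : i + 1 ≤ l := hi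
        simp only [if_pos h1, if_pos h2]
        exact hρrun i hi
      · have e1 : (if l ≤ l then ρ₀ l else σ (l + 1)) = ρ₀ l := if_pos le_rfl
        have e2 : (if l + 1 ≤ l then ρ₀ (l + 1) else σ (l + 1)) = σ (l + 1) :=
          if_neg (by omega)
        rw [e1, e2, hρend, hend']
        refine ⟨hsT, ?_⟩
        rintro ⟨⟨x, b, y⟩, ht', hb, hRx, hy⟩
        simp only at hb hRx hy
        subst hb
        subst hy
        exact hmax x ht' hRx
    · have hlen : (ws ++ [a]).length = l + 1 := by simp [hl]
      rw [hlen]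
      exact if_neg (by omega)
    · intro i hi ha
      have hi2 : i ≤ l + 1 := by simpa [hl] using hi
      by_cases hle : i ≤ l
      · simp only [if_pos hle]
        exact hρdom i hle (hdom' i hle ha)
      · have heq : i = l + 1 := by omega
        simp only [if_neg hle]
        rw [heq] at ha
        exact ha

private theorem gfp_main [Fintype Q] (M : NA A Q)
    (R : Q → Q → Prop) (hirr : ∀ x, ¬ R x x) (htrans : Transitive R)
    (hsub : ∀ x y, R x y → M.BwDiTraceIncl M x y) :
    (M.prune (NA.PairRel R Eq)).BuchiLang = M.BuchiLang := by
  apply Set.Subset.antisymm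
  · rintro w ⟨π, h0, hrun, hfair⟩
    exact ⟨π, h0, fun i => (hrun i).1, hfair⟩
  · rintro w ⟨π, h0, hrun, hfair⟩
    have hfin : ∀ n : ℕ, ∃ ρ : ℕ → Q, ρ 0 ∈ M.ini ∧
        (M.prune (NA.PairRel R Eq)).FinRun (List.ofFn fun i : Fin n => w i) ρ ∧
        ∀ i ≤ n, π i ∈ M.acc → ρ i ∈ M.acc := by
      intro n
      have hr : M.FinRun (List.ofFn fun i : Fin n => w i) π := by
        intro i hi
        have hg : (List.ofFn fun i : Fin n => w i).get ⟨i, hi⟩ = w i := by simp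
        rw [hg]
        exact hrun i
      obtain ⟨ρ, ha, hb, hc, hd⟩ := gfp_key M R hirr htrans hsub _ π h0 hr
      exact ⟨ρ, ha, hb, fun i hi => hd i (by simpa using hi)⟩
    choose F hF0 hFrun hFdom using hfin
    set U : Ultrafilter ℕ := Filter.hyperfilter ℕ with hU
    have hcof : ∀ m : ℕ, {n | m ≤ n} ∈ U := by
      intro m
      apply Filter.mem_hyperfilter_of_finite_compl
      have he : {n : ℕ | m ≤ n}ᶜ = {n | n < m} := by
        ext n; simp [not_le]
      rw [he]
      exact Set.finite_lt_nat m
    have hlim : ∀ i : ℕ, ∃ q : Q, {n | F n i = q} ∈ U :=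
      fun i => gfp_ultra_limit U _
    choose ρ hρ using hlim
    refine ⟨ρ, ?_, ?_, ?_⟩
    · obtain ⟨n, hn⟩ := Filter.nonempty_of_mem (hρ 0)
      have hn' : F n 0 = ρ 0 := hn
      rw [← hn']
      exact hF0 n
    · intro i
      have hmem : ({n | F n i = ρ i} ∩ {n | F n (i + 1) = ρ (i + 1)} ∩ {n | i + 1 ≤ n}) ∈ U :=
        Filter.inter_mem (Filter.inter_mem (hρ i) (hρ (i + 1))) (hcof (i + 1))
      obtain ⟨n, hn⟩ := Filter.nonempty_of_mem hmem
      obtain ⟨⟨h1, h2⟩, h3⟩ := hn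
      have h1' : F n i = ρ i := h1
      have h2' : F n (i + 1) = ρ (i + 1) := h2
      have h3' : i + 1 ≤ n := h3
      have hi : i < (List.ofFn fun j : Fin n => w j).length := by
        simp; omega
      have ht := hFrun n i hi
      have hg : (List.ofFn fun j : Fin n => w j).get ⟨i, hi⟩ = w i := by simp
      rw [hg, h1', h2'] at ht
      exact ht
    · intro m
      obtain ⟨k, hk, hacc⟩ := hfair m
      have hmem : ({n | F n k = ρ k} ∩ {n | k ≤ n}) ∈ U :=
        Filter.inter_mem (hρ k) (hcof k)
      obtain ⟨n, hn⟩ := Filter.nonempty_of_mem hmem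
      obtain ⟨h1, h2⟩ := hn
      have h1' : F n k = ρ k := h1
      have h2' : k ≤ n := h2
      refine ⟨k, hk, ?_⟩
      rw [← h1']
      exact hFdom n k h2' hacc

private lemma gfp_bwdi_trans (M : NA A Q) {x y z : Q}
    (h1 : M.BwDiTraceIncl M x y) (h2 : M.BwDiTraceIncl M y z) :
    M.BwDiTraceIncl M x z := by
  intro w π hi hr he
  obtain ⟨ρ, a1, b1, c1, d1⟩ := h1 w π hi hr he
  obtain ⟨ρ', a2, b2, c2, d2⟩ := h2 w ρ a1 b1 c1
  exact ⟨ρ', a2, b2, c2, fun i hi' ha => d2 i hi' (d1 i hi' ha)⟩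

end GFPAux

/-- For every strict partial order `R` contained in backward direct
trace inclusion, `P(R, id)` is good for pruning on complete NBAs; in particular
`P(⊏ᵇʷ⁻ᵈⁱ, id)` is good for pruning. -/
theorem prune_bwDiTraceIncl_id_gfp
    {A Q : Type*} [Fintype A] [Fintype Q] (M : NA A Q) (hM : M.Complete)
    (R : Q → Q → Prop) (hirr : ∀ x, ¬ R x x) (htrans : Transitive R)
    (hsub : ∀ x y, R x y → M.BwDiTraceIncl M x y) :
    (M.prune (NA.PairRel R Eq)).BuchiLang = M.BuchiLang ∧
    (M.prune (NA.PairRel (NA.StrictRel (M.BwDiTraceIncl M)) Eq)).BuchiLang = M.BuchiLang := by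
  constructor
  · exact gfp_main M R hirr htrans hsub
  · apply gfp_main M
    · rintro x ⟨h1, h2⟩
      exact h2 h1
    · rintro x y z ⟨hxy, hyx⟩ ⟨hyz, hzy⟩
      exact ⟨gfp_bwdi_trans M hxy hyz, fun hzx => hzy (gfp_bwdi_trans M hzx hxy)⟩
    · exact fun x y h => h.1
end

section
/- Let A = (Σ, Q, I, F, δ) be a complete NBA. The relation P(⊏^{bw-di-sim}, ⊑^{di}), which compares source states of transitions by strict backward direct simulation and target states by direct trace inclusion, is good for pruning: L(Prune(A, P(⊏^{bw-di-sim}, ⊑^{di}))) = L(A). -/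
/-!
A pruned transition `(p, a, r)` of an initial run is subsumed by a transition `(p', a, r')`
with `p ⊏ p'` and `r ⊑ r'`. Rerouting the prefix backwards into `p'` along the backward
simulation and the suffix forwards from `r'` along the trace inclusion gives an initial run that
is accepting wherever the old one was. On the first `n` positions this raises the vector of
ranks `|{x | x ⊑ ρ i}|` strictly in the lexicographic order, so a run maximizing that vector
uses no pruned transition before `n`. Since the state space is finite, a compactness (König)
argument turns these runs into a single run avoiding pruned transitions altogether.
-/

theorem Pi.toLex_lt_toLex_of_le_of_lt {ι : Type*} [LinearOrder ι] [WellFoundedLT ι]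
    {β : ι → Type*} [∀ i, PartialOrder (β i)] {x y : ∀ i, β i} {j : ι}
    (hle : ∀ i < j, x i ≤ y i) (hlt : x j < y j) : toLex x < toLex y := by
  obtain ⟨k, hk, hmin⟩ := wellFounded_lt.has_min {i | x i ≠ y i} ⟨j, hlt.ne⟩
  refine ⟨k, fun i hi => not_not.mp fun hne => hmin i hne hi, ?_⟩
  rcases (not_lt.mp (hmin j hlt.ne)).lt_or_eq with hkj | rfl
  · exact (hle k hkj).lt_of_ne hk
  · exact hlt

/-- König's lemma for sequences in a finite type constrained by their consecutive entries. -/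
theorem exists_seq_of_forall_exists_prefix {Q : Type*} [Finite Q] {s : Set Q}
    {R : ℕ → Q → Q → Prop} (h : ∀ n, ∃ ρ : ℕ → Q, ρ 0 ∈ s ∧ ∀ i < n, R i (ρ i) (ρ (i + 1))) :
    ∃ ρ : ℕ → Q, ρ 0 ∈ s ∧ ∀ i, R i (ρ i) (ρ (i + 1)) := by
  let _ : TopologicalSpace Q := ⊥
  have _ : DiscreteTopology Q := ⟨rfl⟩
  let S : ℕ → Set (ℕ → Q) := fun n => {ρ | ρ 0 ∈ s ∧ ∀ i < n, R i (ρ i) (ρ (i + 1))}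
  have hclosed : ∀ n, IsClosed (S n) := fun n => by
    simp only [S, Set.ofPred_and, Set.ofPred_forall]
    exact ((isClosed_discrete s).preimage (continuous_apply 0)).inter <|
      isClosed_iInter fun i => isClosed_iInter fun _ =>
        (isClosed_discrete {q : Q × Q | R i q.1 q.2}).preimage
          (f := fun ρ : ℕ → Q => (ρ i, ρ (i + 1))) (by fun_prop)
  obtain ⟨ρ, hρ⟩ := IsCompact.nonempty_iInter_of_sequence_nonempty_isCompact_isClosed S
    (fun n ρ hρ => ⟨hρ.1, fun i hi => hρ.2 i (by omega)⟩) h (hclosed 0).isCompact hclosed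
  rw [Set.mem_iInter] at hρ
  exact ⟨ρ, (hρ 0).1, fun i => (hρ (i + 1)).2 i i.lt_succ_self⟩

namespace NA

variable {A Q Q₁ Q₂ Q₃ : Type*}

theorem ncard_setOf_rel_le_of_rel {α : Type*} [Finite α] {r : α → α → Prop} [IsTrans α r]
    {a b : α} (h : r a b) : {x | r x a}.ncard ≤ {x | r x b}.ncard :=
  Set.ncard_le_ncard (fun _ hx => _root_.trans hx h)

theorem ncard_setOf_rel_lt_of_strictRel {α : Type*} [Finite α] {r : α → α → Prop}
    [IsPreorder α r] {a b : α} (h : StrictRel r a b) : {x | r x a}.ncard < {x | r x b}.ncard :=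
  Set.ncard_lt_ncard ⟨fun _ hx => _root_.trans hx h.1, fun hsub => h.2 (hsub (refl b))⟩

theorem isBwDiSim_eq (M : NA A Q) : IsBwDiSim M M Eq := by
  rintro p _ rfl
  exact ⟨id, id, fun _ p' ht => ⟨p', ht, rfl⟩⟩

theorem IsBwDiSim.comp {M : NA A Q₁} {N : NA A Q₂} {K : NA A Q₃} {R : Q₁ → Q₂ → Prop}
    {S : Q₂ → Q₃ → Prop} (hR : IsBwDiSim M N R) (hS : IsBwDiSim N K S) :
    IsBwDiSim M K (Relation.Comp R S) := by
  rintro x z ⟨y, hxy, hyz⟩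
  obtain ⟨haccxy, hinixy, hstepxy⟩ := hR x y hxy
  obtain ⟨haccyz, hiniyz, hstepyz⟩ := hS y z hyz
  refine ⟨haccyz ∘ haccxy, hiniyz ∘ hinixy, fun a x' ht => ?_⟩
  obtain ⟨y', hty, hxy'⟩ := hstepxy a x' ht
  obtain ⟨z', htz, hyz'⟩ := hstepyz a y' hty
  exact ⟨z', htz, y', hxy', hyz'⟩

theorem isBwDiSim_bwDiSim (M : NA A Q₁) (N : NA A Q₂) : IsBwDiSim M N (M.BwDiSim N) := by
  rintro p q ⟨R, hR, hpq⟩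
  obtain ⟨hacc, hini, hstep⟩ := hR p q hpq
  refine ⟨hacc, hini, fun a p' ht => ?_⟩
  obtain ⟨q', hq', hR'⟩ := hstep a p' ht
  exact ⟨q', hq', R, hR, hR'⟩

instance (M : NA A Q) : IsPreorder Q (M.BwDiSim M) where
  refl _ := ⟨Eq, isBwDiSim_eq M, rfl⟩
  trans _ q _ hpq hqr :=
    ⟨_, (isBwDiSim_bwDiSim M M).comp (isBwDiSim_bwDiSim M M), q, hpq, hqr⟩

theorem IsBwDiSim.exists_prefix {M : NA A Q₁} {N : NA A Q₂} {R : Q₁ → Q₂ → Prop}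
    (hR : IsBwDiSim M N R) (w : ℕ → A) {ρ : ℕ → Q₁} {j : ℕ}
    (hρ : ∀ i < j, (ρ i, w i, ρ (i + 1)) ∈ M.trans) {q : Q₂} (hq : R (ρ j) q) :
    ∃ σ : ℕ → Q₂, σ j = q ∧ (∀ i < j, (σ i, w i, σ (i + 1)) ∈ N.trans) ∧
      ∀ i ≤ j, R (ρ i) (σ i) := by
  induction j generalizing q with
  | zero => exact ⟨fun _ => q, rfl, by simp, fun i hi => by rwa [Nat.le_zero.mp hi]⟩
  | succ j ih =>
    obtain ⟨q', ht, hq'⟩ := (hR _ _ hq).2.2 (w j) (ρ j) (hρ j j.lt_succ_self)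
    obtain ⟨σ, hσj, hσ, hσR⟩ := ih (fun i hi => hρ i (by omega)) hq'
    refine ⟨Function.update σ (j + 1) q, by simp, fun i hi => ?_, fun i hi => ?_⟩
    · rcases Nat.lt_succ_iff_lt_or_eq.mp hi with hi | rfl
      · simpa [Function.update_of_ne (by omega : i ≠ j + 1),
          Function.update_of_ne (by omega : i + 1 ≠ j + 1)] using hσ i hi
      · simpa [hσj] using ht
    · rcases Nat.le_succ_iff.mp hi with hi | rfl
      · simpa [Function.update_of_ne (by omega : i ≠ j + 1)] using hσR i hi
      · simpa using hq

theorem infRun_splice (M : NA A Q) {w : ℕ → A} {σ τ : ℕ → Q} {j : ℕ}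
    (hσ : ∀ i < j, (σ i, w i, σ (i + 1)) ∈ M.trans) (hj : (σ j, w j, τ 0) ∈ M.trans)
    (hτ : M.InfRun (fun k => w (j + 1 + k)) τ) :
    M.InfRun w (fun i => if i ≤ j then σ i else τ (i - (j + 1))) := by
  intro i
  rcases lt_trichotomy i j with hi | rfl | hi
  · simpa [hi.le, Nat.succ_le_of_lt hi] using hσ i hi
  · simpa using hj
  · obtain ⟨k, rfl⟩ : ∃ k, i = j + 1 + k := ⟨i - (j + 1), by omega⟩
    simp only [if_neg (show ¬j + 1 + k ≤ j by omega), if_neg (show ¬j + 1 + k + 1 ≤ j by omega),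
      show j + 1 + k - (j + 1) = k by omega, show j + 1 + k + 1 - (j + 1) = k + 1 by omega]
    exact hτ k

theorem exists_run_of_bwDiSim_of_diTraceIncl {M : NA A Q₁} {N : NA A Q₂} {w : ℕ → A}
    {ρ : ℕ → Q₁} (hρ0 : ρ 0 ∈ M.ini) (hρ : M.InfRun w ρ) {j : ℕ} {p : Q₂} {r : Q₂}
    (ht : (p, w j, r) ∈ N.trans) (hp : M.BwDiSim N (ρ j) p)
    (hr : M.DiTraceIncl N (ρ (j + 1)) r) :
    ∃ ρ' : ℕ → Q₂, ρ' 0 ∈ N.ini ∧ N.InfRun w ρ' ∧ (∀ i, ρ i ∈ M.acc → ρ' i ∈ N.acc) ∧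
      (∀ i ≤ j, M.BwDiSim N (ρ i) (ρ' i)) ∧ ρ' j = p := by
  obtain ⟨σ, hσj, hσ, hσR⟩ := (isBwDiSim_bwDiSim M N).exists_prefix w (fun i _ => hρ i) hp
  obtain ⟨τ, hτ0, hτ, hτacc⟩ := hr (fun k => w (j + 1 + k)) (fun k => ρ (j + 1 + k)) rfl
    (fun k => by simpa [Nat.add_assoc] using hρ (j + 1 + k))
  refine ⟨_, ?_, infRun_splice N hσ (by rwa [hσj, hτ0]) hτ, fun i hacc => ?_,
    fun i hi => by simpa [hi] using hσR i hi, by simpa using hσj⟩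
  · simpa using (isBwDiSim_bwDiSim M N _ _ (hσR 0 j.zero_le)).2.1 hρ0
  · rcases le_or_gt i j with hi | hi
    · simpa [hi] using (isBwDiSim_bwDiSim M N _ _ (hσR i hi)).1 hacc
    · obtain ⟨k, rfl⟩ : ∃ k, i = j + 1 + k := ⟨i - (j + 1), by omega⟩
      simp only [if_neg (show ¬j + 1 + k ≤ j by omega), show j + 1 + k - (j + 1) = k by omega]
      exact hτacc k hacc

theorem buchiLang_prune_subset (M : NA A Q) (P : Q × A × Q → Q × A × Q → Prop) :
    (M.prune P).BuchiLang ⊆ M.BuchiLang :=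
  fun _ ⟨ρ, hρ0, hρ, hfair⟩ => ⟨ρ, hρ0, fun i => (hρ i).1, hfair⟩

theorem exists_run_unpruned_before [Finite Q] (M : NA A Q) {w : ℕ → A} {π : ℕ → Q}
    (hπ0 : π 0 ∈ M.ini) (hπ : M.InfRun w π) (n : ℕ) :
    ∃ ρ : ℕ → Q, ρ 0 ∈ M.ini ∧ ∀ i < n,
      (ρ i, w i, ρ (i + 1)) ∈ (M.prune (PairRel (StrictRel (M.BwDiSim M)) (M.DiTraceIncl M))).trans
        ∧ (π i ∈ M.acc → ρ i ∈ M.acc) := by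
  let T := {ρ : ℕ → Q | ρ 0 ∈ M.ini ∧ M.InfRun w ρ ∧ ∀ i, π i ∈ M.acc → ρ i ∈ M.acc}
  let rank : (Fin n → Q) → Lex (Fin n → ℕ) := fun v =>
    toLex fun i => {x | M.BwDiSim M x (v i)}.ncard
  obtain ⟨_, ⟨ρ, ⟨hρ0, hρ, hρacc⟩, rfl⟩, hmax⟩ := Set.exists_max_image
    ((fun ρ (i : Fin n) => ρ i) '' T) rank (Set.toFinite _) ⟨_, π, ⟨hπ0, hπ, fun _ => id⟩, rfl⟩
  refine ⟨ρ, hρ0, fun i hi => ⟨⟨hρ i, ?_⟩, hρacc i⟩⟩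
  rintro ⟨⟨p, a, r⟩, ht, rfl, hp, hr⟩
  obtain ⟨ρ', hρ'0, hρ', hρ'acc, hle, rfl⟩ :=
    exists_run_of_bwDiSim_of_diTraceIncl hρ0 hρ ht hp.1 hr
  refine (hmax _ ⟨ρ', ⟨hρ'0, hρ', fun k hk => hρ'acc k (hρacc k hk)⟩, rfl⟩).not_gt ?_
  exact Pi.toLex_lt_toLex_of_le_of_lt (j := ⟨i, hi⟩)
    (fun k hk => ncard_setOf_rel_le_of_rel (hle k (le_of_lt hk)))
    (ncard_setOf_rel_lt_of_strictRel hp)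

end NA

theorem prune_strictBwDiSim_diTraceIncl_gfp_general
    {A Q : Type*} [Fintype Q] (M : NA A Q) :
    (M.prune (NA.PairRel (NA.StrictRel (M.BwDiSim M)) (M.DiTraceIncl M))).BuchiLang
      = M.BuchiLang := by
  refine (M.buchiLang_prune_subset _).antisymm ?_
  rintro w ⟨π, hπ0, hπ, hfair⟩
  obtain ⟨ρ, hρ0, hρ⟩ := exists_seq_of_forall_exists_prefix
    (R := fun i p q => (p, w i, q) ∈ (M.prune _).trans ∧ (π i ∈ M.acc → p ∈ M.acc))
    (M.exists_run_unpruned_before hπ0 hπ)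
  exact ⟨ρ, hρ0, fun i => (hρ i).1, fun n => (hfair n).imp fun m ⟨hm, hacc⟩ => ⟨hm, (hρ m).2 hacc⟩⟩

/-- `P(⊏ᵇʷ⁻ᵈⁱ⁻ˢⁱᵐ, ⊑ᵈⁱ)` (strict backward direct simulation on
sources, direct trace inclusion on targets) is good for pruning on complete NBAs. -/
theorem prune_strictBwDiSim_diTraceIncl_gfp
    {A Q : Type*} [Fintype A] [Fintype Q] (M : NA A Q) (hM : M.Complete) :
    (M.prune (NA.PairRel (NA.StrictRel (M.BwDiSim M)) (M.DiTraceIncl M))).BuchiLang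
      = M.BuchiLang :=
  prune_strictBwDiSim_diTraceIncl_gfp_general M
end

section
/- Let A = (Σ, Q, I, F, δ) be a complete NFA and let R ⊆ Q × Q be a strict partial order (an irreflexive and transitive relation) contained in forward finite trace inclusion ⊑^{fw}. Then P(id, R) is good for pruning: L(Prune(A, P(id, R))) = L(A). In particular, P(id, ⊏^{fw}) is good for pruning, where ⊏^{fw} is the strict version of ⊑^{fw}. -/
section Aux

lemma exists_max_aux {α : Type*} [Finite α] (r : α → α → Prop)
    (hirr : ∀ x, ¬ r x x) (ht : Transitive r) (S : Set α) (hS : S.Nonempty) :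
    ∃ m ∈ S, ∀ x ∈ S, ¬ r m x := by
  haveI : IsTrans α (flip r) := ⟨fun a b c h1 h2 => ht h2 h1⟩
  haveI : IsIrrefl α (flip r) := ⟨hirr⟩
  obtain ⟨m, hm, hmax⟩ := (Finite.wellFounded_of_trans_of_irrefl (flip r)).has_min S hS
  exact ⟨m, hm, fun x hx => hmax x hx⟩

lemma prune_gfp_aux {A Q : Type*} [Fintype Q] (M : NA A Q)
    (R : Q → Q → Prop) (hirr : ∀ x, ¬ R x x) (htrans : Transitive R)
    (hsub : ∀ x y, R x y → M.FwFinTraceIncl M x y) :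
    (M.prune (NA.PairRel Eq R)).FinLang = M.FinLang := by
  apply Set.eq_of_subset_of_subset
  · rintro w ⟨π, h0, hrun, hacc⟩
    exact ⟨π, h0, fun i h => (hrun i h).1, hacc⟩
  · rintro w ⟨π, h0, hrun, hacc⟩
    set n := w.length with hn
    -- lexicographic strict order on restricted runs
    set L : (Fin (n+1) → Q) → (Fin (n+1) → Q) → Prop :=
      fun f g => ∃ i : Fin (n+1), (∀ j, j < i → f j = g j) ∧ R (f i) (g i) with hL
    have hLirr : ∀ f, ¬ L f f := by
      rintro f ⟨i, _, hi⟩; exact hirr _ hi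
    have hLtrans : Transitive L := by
      rintro f g h ⟨i, hpre, hi⟩ ⟨i', hpre', hi'⟩
      rcases lt_trichotomy i i' with hlt | heq | hgt
      · exact ⟨i, fun j hj => (hpre j hj).trans (hpre' j (hj.trans hlt)),
          hpre' i hlt ▸ hi⟩
      · subst heq
        exact ⟨i, fun j hj => (hpre j hj).trans (hpre' j hj), htrans hi hi'⟩
      · exact ⟨i', fun j hj => (hpre j (hj.trans hgt)).trans (hpre' j hj),
          (hpre i' hgt) ▸ hi'⟩
    set S : Set (Fin (n+1) → Q) :=
      {f | ∃ ρ : ℕ → Q, (∀ j : Fin (n+1), f j = ρ (j : ℕ)) ∧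
        ρ 0 ∈ M.ini ∧ M.FinRun w ρ ∧ ρ n ∈ M.acc} with hS
    have hSne : S.Nonempty := ⟨fun j => π (j : ℕ), π, fun j => rfl, h0, hrun, hacc⟩
    obtain ⟨m, ⟨ρ, hm, hρ0, hρrun, hρacc⟩, hmax⟩ := exists_max_aux L hLirr hLtrans S hSne
    refine ⟨ρ, hρ0, ?_, hρacc⟩
    intro i hi
    refine ⟨hρrun i hi, ?_⟩
    rintro ⟨⟨p', a', r'⟩, ht', hsym, hfst, hR⟩
    simp only at hsym hfst hR
    have hin : i < n := hi
    -- use forward trace inclusion from ρ (i+1) to r'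
    have hwd : (w.drop (i+1)).length = n - (i+1) := by simp [hn]
    have hτrun : M.FinRun (w.drop (i+1)) (fun j => ρ (i+1+j)) := by
      intro j hj
      have hj' : i + 1 + j < n := by rw [hwd] at hj; omega
      have := hρrun (i+1+j) hj'
      have hg : (w.drop (i+1)).get ⟨j, hj⟩ = w.get ⟨i+1+j, hj'⟩ := by
        simp [List.get_eq_getElem, List.getElem_drop]
      rw [hg]
      exact this
    have hτacc : (fun j => ρ (i+1+j)) (w.drop (i+1)).length ∈ M.acc := by
      have h1 : i + 1 + (w.drop (i+1)).length = n := by rw [hwd]; omega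
      show ρ (i + 1 + (w.drop (i+1)).length) ∈ M.acc
      rw [h1]; exact hρacc
    obtain ⟨σ, hσ0, hσrun, hσacc⟩ :=
      hsub _ _ hR (w.drop (i+1)) (fun j => ρ (i+1+j)) rfl hτrun hτacc
    -- build the improved run
    set ρ' : ℕ → Q := fun j => if j ≤ i then ρ j else σ (j - (i+1)) with hρ'
    have hle : ∀ j, j ≤ i → ρ' j = ρ j := fun j hj => by simp only [hρ', if_pos hj]
    have hgt : ∀ j, i < j → ρ' j = σ (j - (i+1)) := fun j hj => by
      simp only [hρ', if_neg (by omega : ¬ j ≤ i)]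
    have hρ'run : M.FinRun w ρ' := by
      intro j hj
      rcases lt_trichotomy j i with hlt | heq | hgt'
      · rw [hle j hlt.le, hle (j+1) hlt]
        exact hρrun j hj
      · subst heq
        rw [hle j le_rfl, hgt (j+1) (Nat.lt_succ_self j)]
        have e2 : j + 1 - (j + 1) = 0 := by omega
        rw [e2, hσ0, hfst, show w.get ⟨j, hj⟩ = a' from hsym]
        exact ht'
      · rw [hgt j hgt', hgt (j+1) (by omega)]
        have e2 : j + 1 - (i + 1) = j - (i+1) + 1 := by omega
        rw [e2]
        have hjd : j - (i+1) < (w.drop (i+1)).length := by rw [hwd]; omega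
        have := hσrun (j - (i+1)) hjd
        have hg : (w.drop (i+1)).get ⟨j - (i+1), hjd⟩ = w.get ⟨j, hj⟩ := by
          simp only [List.get_eq_getElem, List.getElem_drop]
          congr 1; omega
        rw [← hg]; exact this
    have hρ'acc : ρ' n ∈ M.acc := by
      rw [hgt n hin, ← hwd]; exact hσacc
    have hρ'0 : ρ' 0 ∈ M.ini := by
      rw [hle 0 (Nat.zero_le i)]; exact hρ0
    have hmem : (fun j : Fin (n+1) => ρ' (j : ℕ)) ∈ S :=
      ⟨ρ', fun j => rfl, hρ'0, hρ'run, hρ'acc⟩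
    apply hmax _ hmem
    refine ⟨⟨i+1, by omega⟩, ?_, ?_⟩
    · intro j hj
      have hji : (j : ℕ) ≤ i := by
        have := Fin.lt_iff_val_lt_val.mp hj
        simp only [Fin.val_mk] at this
        omega
      simp only [hm j, hle (j : ℕ) hji]
    · show R (m ⟨i+1, _⟩) (ρ' (i+1))
      rw [hm, hgt (i+1) (Nat.lt_succ_self i)]
      have : i + 1 - (i + 1) = 0 := by omega
      rw [this, hσ0]
      exact hR

end Aux

/-- For every strict partial order `R` contained in forward finite
trace inclusion, `P(id, R)` is good for pruning on complete NFAs; in particular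
`P(id, ⊏ᶠʷ)` is good for pruning. -/
theorem prune_id_fwFinTraceIncl_gfp
    {A Q : Type*} [Fintype A] [Fintype Q] (M : NA A Q) (hM : M.Complete)
    (R : Q → Q → Prop) (hirr : ∀ x, ¬ R x x) (htrans : Transitive R)
    (hsub : ∀ x y, R x y → M.FwFinTraceIncl M x y) :
    (M.prune (NA.PairRel Eq R)).FinLang = M.FinLang ∧
    (M.prune (NA.PairRel Eq (NA.StrictRel (M.FwFinTraceIncl M)))).FinLang = M.FinLang := by
  have key := fun (R' : Q → Q → Prop) hi ht hs => prune_gfp_aux M R' hi ht hs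
  constructor
  · exact key R hirr htrans hsub
  · apply key
    · rintro x ⟨h1, h2⟩; exact h2 h1
    · rintro x y z ⟨h1, h2⟩ ⟨h3, h4⟩
      refine ⟨fun w π hπ0 hrun hacc => ?_, fun hzx => h2 ?_⟩
      · obtain ⟨ρ, hρ0, hρrun, hρacc⟩ := h1 w π hπ0 hrun hacc
        exact h3 w ρ hρ0 hρrun hρacc
      · intro w π hπ0 hrun hacc
        obtain ⟨ρ, hρ0, hρrun, hρacc⟩ := h3 w π hπ0 hrun hacc
        exact hzx w ρ hρ0 hρrun hρacc
    · rintro x y ⟨h1, _⟩; exact h1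
end

section
/- Let A = (Σ, Q, I, F, δ) be a complete NFA and let R ⊆ Q × Q be a strict partial order (an irreflexive and transitive relation) contained in backward finite trace inclusion ⊑^{bw}. Then P(R, id) is good for pruning: L(Prune(A, P(R, id))) = L(A). In particular, P(⊏^{bw}, id) is good for pruning, where ⊏^{bw} is the strict version of ⊑^{bw}. -/
/-- Auxiliary: the core pruning lemma. -/
lemma prune_aux {A Q : Type*} [Fintype Q] (M : NA A Q)
    (R : Q → Q → Prop) (hirr : ∀ x, ¬ R x x) (htrans : Transitive R)
    (hsub : ∀ x y, R x y → M.BwFinTraceIncl M x y) :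
    (M.prune (NA.PairRel R Eq)).FinLang = M.FinLang := by
  apply Set.eq_of_subset_of_subset
  · rintro w ⟨π, h0, hrun, hacc⟩
    exact ⟨π, h0, fun i h => (hrun i h).1, hacc⟩
  rintro w ⟨π₀, hπ₀⟩
  set n := w.length with hn
  set lex : (Fin (n+1) → Q) → (Fin (n+1) → Q) → Prop :=
    fun f g => ∃ k, (∀ j, k < j → f j = g j) ∧ R (f k) (g k) with hlex
  have lexirr : ∀ f, ¬ lex f f := by
    rintro f ⟨k, -, hk⟩; exact hirr _ hk
  have lextrans : Transitive lex := by
    rintro f g h ⟨k1, he1, hr1⟩ ⟨k2, he2, hr2⟩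
    rcases lt_trichotomy k1 k2 with hk | hk | hk
    · exact ⟨k2, fun j hj => (he1 j (hk.trans hj)).trans (he2 j hj),
        by rw [he1 k2 hk]; exact hr2⟩
    · subst hk; exact ⟨k1, fun j hj => (he1 j hj).trans (he2 j hj), htrans hr1 hr2⟩
    · exact ⟨k1, fun j hj => (he1 j hj).trans (he2 j (hk.trans hj)),
        by rw [← he2 k1 hk]; exact hr1⟩
  set r : (ℕ → Q) → (ℕ → Q) → Prop :=
    fun σ τ => lex (fun j : Fin (n+1) => τ j) (fun j : Fin (n+1) => σ j) with hr
  have hwf : WellFounded r := by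
    have h1 : WellFounded (fun f g : Fin (n+1) → Q => lex g f) := by
      haveI : IsTrans (Fin (n+1) → Q) (fun f g => lex g f) :=
        ⟨fun a b c hab hbc => lextrans hbc hab⟩
      haveI : IsIrrefl (Fin (n+1) → Q) (fun f g => lex g f) := ⟨fun a => lexirr a⟩
      exact Finite.wellFounded_of_trans_of_irrefl _
    exact InvImage.wf (fun (σ : ℕ → Q) (j : Fin (n+1)) => σ (j : ℕ)) h1
  suffices h : ∀ π : ℕ → Q, (π 0 ∈ M.ini ∧ M.FinRun w π ∧ π n ∈ M.acc) →
      w ∈ (M.prune (NA.PairRel R Eq)).FinLang from h π₀ hπ₀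
  intro π
  induction π using hwf.induction with
  | _ π IH =>
  rintro ⟨h0, hrun, hacc⟩
  by_cases hall : ∀ (i : ℕ) (h : i < n),
      (π i, w.get ⟨i, h⟩, π (i+1)) ∈ (M.prune (NA.PairRel R Eq)).trans
  · exact ⟨π, h0, hall, hacc⟩
  push_neg at hall
  obtain ⟨i, hi, hbad⟩ := hall
  have hmem : (π i, w.get ⟨i, hi⟩, π (i+1)) ∈ M.trans := hrun i hi
  have hex : ∃ t' ∈ M.trans, NA.PairRel R Eq (π i, w.get ⟨i, hi⟩, π (i+1)) t' := by
    by_contra hc; exact hbad ⟨hmem, hc⟩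
  obtain ⟨⟨p', a, r'⟩, ht', ha, hR, hEq⟩ := hex
  simp only at ha hR hEq
  have hlen : (w.take i).length = i := by
    rw [List.length_take]; omega
  have hpre : M.FinRun (w.take i) π := by
    intro j hj
    have hj' : j < n := by rw [hlen] at hj; omega
    have := hrun j hj'
    have hget : (w.take i).get ⟨j, hj⟩ = w.get ⟨j, hj'⟩ := by
      simp [List.get_eq_getElem, List.getElem_take]
    rw [hget]; exact this
  obtain ⟨ρ, hρ0, hρrun, hρend⟩ := hsub _ _ hR (w.take i) π h0 hpre (by rw [hlen])
  rw [hlen] at hρend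
  set π' : ℕ → Q := fun j => if j ≤ i then ρ j else π j with hπ'
  have hπ'le : ∀ j, j ≤ i → π' j = ρ j := fun j hj => by simp [hπ', hj]
  have hπ'gt : ∀ j, i < j → π' j = π j := fun j hj => by simp [hπ', Nat.not_le.mpr hj]
  apply IH π'
  · refine ⟨⟨i, by omega⟩, ?_, ?_⟩
    · intro j hj
      have : i < (j : ℕ) := hj
      simp only
      rw [hπ'gt j this]
    · simp only
      rw [hπ'le i le_rfl, hρend]; exact hR
  refine ⟨?_, ?_, ?_⟩
  · rw [hπ'le 0 (Nat.zero_le i)]; exact hρ0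
  · intro j hj
    rcases lt_trichotomy j i with hji | hji | hji
    · rw [hπ'le j hji.le, hπ'le (j+1) hji]
      have hj' : j < (w.take i).length := by rw [hlen]; exact hji
      have := hρrun j hj'
      have hget : (w.take i).get ⟨j, hj'⟩ = w.get ⟨j, hj⟩ := by
        simp [List.get_eq_getElem, List.getElem_take]
      rw [hget] at this; exact this
    · subst hji
      rw [hπ'le j le_rfl, hπ'gt (j+1) (by omega), hρend]
      have hget : w.get ⟨j, hj⟩ = a := ha
      rw [hget, hEq]
      exact ht'
    · rw [hπ'gt j hji, hπ'gt (j+1) (by omega)]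
      exact hrun j hj
  · rw [hπ'gt n hi]; exact hacc

/-- For every strict partial order `R` contained in backward finite
trace inclusion, `P(R, id)` is good for pruning on complete NFAs; in particular
`P(⊏ᵇʷ, id)` is good for pruning. -/
theorem prune_bwFinTraceIncl_id_gfp
    {A Q : Type*} [Fintype A] [Fintype Q] (M : NA A Q) (hM : M.Complete)
    (R : Q → Q → Prop) (hirr : ∀ x, ¬ R x x) (htrans : Transitive R)
    (hsub : ∀ x y, R x y → M.BwFinTraceIncl M x y) :
    (M.prune (NA.PairRel R Eq)).FinLang = M.FinLang ∧
    (M.prune (NA.PairRel (NA.StrictRel (M.BwFinTraceIncl M)) Eq)).FinLang = M.FinLang := by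
  constructor
  · exact prune_aux M R hirr htrans hsub
  · apply prune_aux M (NA.StrictRel (M.BwFinTraceIncl M))
    · rintro x ⟨h1, h2⟩; exact h2 h1
    · rintro x y z ⟨hxy, hyx⟩ ⟨hyz, hzy⟩
      refine ⟨?_, fun hzx => hzy ?_⟩
      · intro w π h0 hrun hend
        obtain ⟨ρ, hρ0, hρrun, hρend⟩ := hxy w π h0 hrun hend
        exact hyz w ρ hρ0 hρrun hρend
      · intro w π h0 hrun hend
        obtain ⟨ρ, hρ0, hρrun, hρend⟩ := hzx w π h0 hrun hend
        exact hxy w ρ hρ0 hρrun hρend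
    · exact fun x y h => h.1
end

section
/- Let A = (Σ, Q, I, F, δ) be a complete NFA. The relation P(⊏^{bw-sim}, ⊑^{fw}), which compares source states of transitions by strict backward finite-word simulation and target states by forward finite trace inclusion, is good for pruning: L(Prune(A, P(⊏^{bw-sim}, ⊑^{fw}))) = L(A). -/
/-! Take an accepting run on `w` whose vector of ranks is lexicographically least, where
the rank of a state counts the states strictly above it for the backward simulation. If one of
its transitions `p →a r` were pruned by some `p' →a r'` with `p ⊏ p'` and `r ⊑ᶠʷ r'`, then
lifting the prefix backwards to `p'` and replacing the suffix by an accepting trace from `r'`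
would give an accepting run whose ranks weakly decrease before `p` and strictly decrease at `p`,
contradicting minimality. So the least run survives pruning. -/

theorem Pi.toLex_lt_of_le_of_lt {ι β : Type*} [LinearOrder ι] [WellFoundedLT ι] [LinearOrder β]
    {x y : ι → β} {i : ι} (hle : ∀ j < i, x j ≤ y j) (hlt : x i < y i) : toLex x < toLex y := by
  obtain ⟨k, hk, hmin⟩ := wellFounded_lt.has_min {j | x j ≠ y j} ⟨i, hlt.ne⟩
  have hki : k ≤ i := not_lt.mp fun hik => hmin i hlt.ne hik
  refine ⟨k, fun j hjk => not_not.mp fun hj => hmin j hj hjk, lt_of_le_of_ne ?_ hk⟩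
  rcases hki.lt_or_eq with hki | rfl
  · exact hle k hki
  · exact hlt.le

namespace NA

variable {A Q Q₁ Q₂ Q₃ : Type*}

section FinRun

variable {M : NA A Q}

theorem finRun_congr {w : List A} {π ρ : ℕ → Q} (h : ∀ j ≤ w.length, π j = ρ j) :
    M.FinRun w π ↔ M.FinRun w ρ :=
  forall₂_congr fun j hj => by rw [h j hj.le, h (j + 1) hj]

theorem finRun_nil (π : ℕ → Q) : M.FinRun [] π :=
  fun _ h => absurd h (Nat.not_lt_zero _)

theorem finRun_append {u v : List A} {π : ℕ → Q} :
    M.FinRun (u ++ v) π ↔ M.FinRun u π ∧ M.FinRun v (fun j => π (u.length + j)) := by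
  simp only [FinRun, List.get_eq_getElem, List.length_append]
  constructor
  · intro h
    refine ⟨fun j hj => ?_, fun j hj => ?_⟩
    · simpa [List.getElem_append_left hj] using h j (by omega)
    · have := h (u.length + j) (by omega)
      simpa only [List.getElem_append_right (by omega : u.length ≤ u.length + j),
        Nat.add_sub_cancel_left, Nat.add_assoc] using this
  · rintro ⟨hu, hv⟩ j hj
    rcases lt_or_ge j u.length with hju | hju
    · simpa [List.getElem_append_left hju] using hu j hju
    · obtain ⟨k, rfl⟩ := Nat.exists_eq_add_of_le hju
      simpa only [List.getElem_append_right hju, Nat.add_sub_cancel_left, Nat.add_assoc]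
        using hv k (by omega)

theorem finRun_cons {a : A} {w : List A} {π : ℕ → Q} :
    M.FinRun (a :: w) π ↔ (π 0, a, π 1) ∈ M.trans ∧ M.FinRun w (fun j => π (j + 1)) := by
  rw [← List.singleton_append, finRun_append]
  refine and_congr ⟨fun h => h 0 Nat.one_pos, fun h i hi => ?_⟩ ?_
  · obtain rfl : i = 0 := by simpa using hi
    exact h
  · simp only [List.length_singleton, Nat.add_comm 1]

end FinRun

section BwSim

variable {M : NA A Q₁} {N : NA A Q₂}

theorem isBwSim_bwSim : M.IsBwSim N (M.BwSim N) := by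
  rintro p q ⟨R, hR, hpq⟩
  refine ⟨(hR p q hpq).1, fun a p' hp' => ?_⟩
  obtain ⟨q', hq', hpq'⟩ := (hR p q hpq).2 a p' hp'
  exact ⟨q', hq', R, hR, hpq'⟩

theorem BwSim.trans {O : NA A Q₃} {p : Q₁} {q : Q₂} {r : Q₃}
    (hpq : M.BwSim N p q) (hqr : N.BwSim O q r) : M.BwSim O p r := by
  obtain ⟨R₁, hR₁, hpq⟩ := hpq
  obtain ⟨R₂, hR₂, hqr⟩ := hqr
  refine ⟨Relation.Comp R₁ R₂, ?_, q, hpq, hqr⟩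
  rintro x z ⟨y, hxy, hyz⟩
  refine ⟨(hR₂ y z hyz).1 ∘ (hR₁ x y hxy).1, fun a x' hx' => ?_⟩
  obtain ⟨y', hy', hxy'⟩ := (hR₁ x y hxy).2 a x' hx'
  obtain ⟨z', hz', hyz'⟩ := (hR₂ y z hyz).2 a y' hy'
  exact ⟨z', hz', y', hxy', hyz'⟩

instance (M : NA A Q) : IsTrans Q (M.BwSim M) := ⟨fun _ _ _ => BwSim.trans⟩

theorem IsBwSim.exists_finRun {R : Q₁ → Q₂ → Prop} (hR : M.IsBwSim N R) (w : List A) :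
    ∀ {π : ℕ → Q₁} {q : Q₂}, π 0 ∈ M.ini → M.FinRun w π → R (π w.length) q →
      ∃ ρ : ℕ → Q₂, ρ 0 ∈ N.ini ∧ N.FinRun w ρ ∧ ρ w.length = q ∧
        ∀ j ≤ w.length, R (π j) (ρ j) := by
  induction w using List.reverseRecOn with
  | nil =>
    intro π q hπ0 _ hq
    refine ⟨fun _ => q, (hR _ _ hq).1 hπ0, finRun_nil _, rfl, fun j hj => ?_⟩
    rwa [Nat.le_zero.mp hj]
  | append_singleton u a ih =>
    intro π q hπ0 hπ hq
    simp only [finRun_append, finRun_cons, Nat.add_zero] at hπ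
    obtain ⟨hπu, hπa, -⟩ := hπ
    rw [List.length_append, List.length_singleton] at hq
    obtain ⟨q', hq'a, hq'⟩ := (hR _ _ hq).2 a _ hπa
    obtain ⟨ρ, hρ0, hρ, hρu, hπρ⟩ := ih hπ0 hπu hq'
    have hρ_eq : ∀ j ≤ u.length, Function.update ρ (u.length + 1) q j = ρ j :=
      fun j hj => Function.update_of_ne (by omega) _ _
    refine ⟨Function.update ρ (u.length + 1) q, ?_, ?_, ?_, ?_⟩
    · rwa [hρ_eq 0 (Nat.zero_le _)]
    · simp only [finRun_append, finRun_cons, Nat.add_zero, finRun_congr hρ_eq]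
      refine ⟨hρ, ?_, finRun_nil _⟩
      rwa [hρ_eq _ le_rfl, hρu, Function.update_self]
    · simp
    · intro j hj
      rw [List.length_append, List.length_singleton] at hj
      rcases Nat.lt_or_eq_of_le hj with hj | rfl
      · rw [hρ_eq j (by omega)]
        exact hπρ j (by omega)
      · rwa [Function.update_self]

theorem IsBwSim.exists_accepting_finRun_through {M : NA A Q} {R : Q → Q → Prop}
    (hR : M.IsBwSim M R) {u v : List A} {a : A} {π : ℕ → Q} (hπ0 : π 0 ∈ M.ini)
    (hπ : M.FinRun (u ++ a :: v) π) (hπacc : π (u ++ a :: v).length ∈ M.acc) {p' r' : Q}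
    (ht : (p', a, r') ∈ M.trans) (hp' : R (π u.length) p')
    (hr' : M.FwFinTraceIncl M (π (u.length + 1)) r') :
    ∃ ρ : ℕ → Q, ρ 0 ∈ M.ini ∧ M.FinRun (u ++ a :: v) ρ ∧ ρ (u ++ a :: v).length ∈ M.acc ∧
      ρ u.length = p' ∧ ∀ j ≤ u.length, R (π j) (ρ j) := by
  simp only [finRun_append, finRun_cons] at hπ
  obtain ⟨hπu, -, hπv⟩ := hπ
  have hlen : (u ++ a :: v).length = u.length + (v.length + 1) := by simp
  rw [hlen] at hπacc ⊢
  obtain ⟨ρ, hρ0, hρ, hρu, hπρ⟩ := hR.exists_finRun u hπ0 hπu hp'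
  obtain ⟨τ, hτ0, hτ, hτacc⟩ := hr' v _ rfl hπv hπacc
  let σ : ℕ → Q := fun j => if j ≤ u.length then ρ j else τ (j - (u.length + 1))
  have hσρ : ∀ j ≤ u.length, σ j = ρ j := fun j hj => if_pos hj
  have hστ : ∀ j, σ (u.length + (j + 1)) = τ j := fun j => by
    simp only [σ, if_neg (by omega : ¬ u.length + (j + 1) ≤ u.length)]
    congr 1
    omega
  refine ⟨σ, ?_, ?_, ?_, ?_, ?_⟩
  · rwa [hσρ 0 (Nat.zero_le _)]
  · simp only [finRun_append, finRun_cons, finRun_congr hσρ, Nat.add_zero, hσρ _ le_rfl, hρu,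
      hστ 0, hτ0, hστ]
    exact ⟨hρ, ht, hτ⟩
  · rwa [hστ]
  · rw [hσρ _ le_rfl, hρu]
  · intro j hj
    rw [hσρ j hj]
    exact hπρ j hj

end BwSim

section Rank

variable {R : Q → Q → Prop} {p q : Q}

noncomputable def numStrictAbove (R : Q → Q → Prop) (p : Q) : ℕ :=
  {x | StrictRel R p x}.ncard

theorem setOf_strictRel_subset_of_rel [IsTrans Q R] (h : R p q) :
    {x | StrictRel R q x} ⊆ {x | StrictRel R p x} :=
  fun _ ⟨hqx, hxq⟩ => ⟨_root_.trans h hqx, fun hxp => hxq (_root_.trans hxp h)⟩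

theorem numStrictAbove_le_of_rel [Finite Q] [IsTrans Q R] (h : R p q) :
    numStrictAbove R q ≤ numStrictAbove R p :=
  Set.ncard_le_ncard (setOf_strictRel_subset_of_rel h) (Set.toFinite _)

theorem numStrictAbove_lt_of_strictRel [Finite Q] [IsTrans Q R] (h : StrictRel R p q) :
    numStrictAbove R q < numStrictAbove R p := by
  refine Set.ncard_lt_ncard ?_ (Set.toFinite _)
  rw [Set.ssubset_iff_of_subset (setOf_strictRel_subset_of_rel h.1)]
  exact ⟨q, h, fun hq => hq.2 hq.1⟩

end Rank

theorem finLang_prune_subset (M : NA A Q) (P : (Q × A × Q) → (Q × A × Q) → Prop) :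
    (M.prune P).FinLang ⊆ M.FinLang :=
  fun _ ⟨π, hπ0, hπ, hπacc⟩ => ⟨π, hπ0, fun i hi => (hπ i hi).1, hπacc⟩

theorem finLang_prune_strictRel_fwFinTraceIncl [Finite Q] (M : NA A Q) {R : Q → Q → Prop}
    [IsTrans Q R] (hR : M.IsBwSim M R) :
    (M.prune (PairRel (StrictRel R) (M.FwFinTraceIncl M))).FinLang = M.FinLang := by
  refine (finLang_prune_subset M _).antisymm fun w hw => ?_
  let rank : (ℕ → Q) → Lex (Fin (w.length + 1) → ℕ) :=
    fun π => toLex fun j => numStrictAbove R (π j)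
  obtain ⟨π, ⟨hπ0, hπ, hπacc⟩, hmin⟩ :=
    (InvImage.wf rank wellFounded_lt).has_min
      {π | π 0 ∈ M.ini ∧ M.FinRun w π ∧ π w.length ∈ M.acc} hw
  refine ⟨π, hπ0, fun i hi => ⟨hπ i hi, ?_⟩, hπacc⟩
  rintro ⟨⟨p', a, r'⟩, ht, rfl, hp', hr'⟩
  have hsplit : w = w.take i ++ w[i] :: w.drop (i + 1) := by
    rw [List.getElem_cons_drop, List.take_append_drop]
  have hlen : (w.take i).length = i := List.length_take_of_le hi.le
  rw [hsplit] at hπ hπacc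
  obtain ⟨ρ, hρ0, hρ, hρacc, hρi, hπρ⟩ := hR.exists_accepting_finRun_through hπ0 hπ hπacc
    (by simpa using ht) (by rw [hlen]; exact hp'.1) (by rw [hlen]; exact hr')
  rw [← hsplit] at hρ hρacc
  rw [hlen] at hρi hπρ
  refine hmin ρ ⟨hρ0, hρ, hρacc⟩ (Pi.toLex_lt_of_le_of_lt (i := ⟨i, by omega⟩) ?_ ?_)
  · exact fun j hj => numStrictAbove_le_of_rel (hπρ j (Fin.lt_def.mp hj).le)
  · exact numStrictAbove_lt_of_strictRel (hρi ▸ hp')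

end NA

theorem prune_strictBwSim_fwFinTraceIncl_gfp_general
    {A Q : Type*} [Fintype Q] (M : NA A Q) :
    (M.prune (NA.PairRel (NA.StrictRel (M.BwSim M)) (M.FwFinTraceIncl M))).FinLang
      = M.FinLang :=
  M.finLang_prune_strictRel_fwFinTraceIncl NA.isBwSim_bwSim

/-- `P(⊏ᵇʷ⁻ˢⁱᵐ, ⊑ᶠʷ)` (strict backward finite-word simulation on
sources, forward finite trace inclusion on targets) is good for pruning on
complete NFAs. -/
theorem prune_strictBwSim_fwFinTraceIncl_gfp
    {A Q : Type*} [Fintype A] [Fintype Q] (M : NA A Q) (hM : M.Complete) :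
    (M.prune (NA.PairRel (NA.StrictRel (M.BwSim M)) (M.FwFinTraceIncl M))).FinLang
      = M.FinLang :=
  prune_strictBwSim_fwFinTraceIncl_gfp_general M
end
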